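/- arXiv:1910.09148 — 3 statements merged into one kernel-verified Lean document; each statement's English description precedes it below -/
import Mathlib

section
/- Let V be a variety with 0⃗ and 1⃗ having Boolean factor congruences (BFC). Then V has right existentially definable factor congruences (RexDFC) if and only if for every A ∈ V and every central element e⃗ ∈ Z(A), the factor congruence θ_{1,e} equals the principal congruence θ^A(1⃗,e⃗) generated by the pairs (1ᵢ,eᵢ), 1 ≤ i ≤ n. -/
open FirstOrder FirstOrder.Language FirstOrder.Language.Structure

universe u v w

namespace Paper

variable {L : FirstOrder.Language.{0, 0}}

/-- A congruence on an `L`-algebra: an equivalence relation compatible with all operations. -/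
structure AlgCon (L : FirstOrder.Language.{0, 0}) (A : Type u) [L.Structure A] where
  r : A → A → Prop
  refl : ∀ a, r a a
  symm : ∀ {a b}, r a b → r b a
  trans : ∀ {a b c}, r a b → r b c → r a c
  compat : ∀ {m : ℕ} (f : L.Functions m) (x y : Fin m → A),
    (∀ i, r (x i) (y i)) → r (funMap f x) (funMap f y)

namespace AlgCon

variable {A : Type u} [L.Structure A]

theorem ext' {c d : AlgCon L A} (h : ∀ a b, c.r a b ↔ d.r a b) : c = d := by
  cases c; cases d
  simp only [AlgCon.mk.injEq]
  funext a b
  exact propext (h a b)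

/-- The identity (diagonal) congruence Δ. -/
def delta (L : FirstOrder.Language.{0, 0}) (A : Type u) [L.Structure A] : AlgCon L A where
  r := Eq
  refl := fun _ => rfl
  symm := fun h => h.symm
  trans := fun h1 h2 => h1.trans h2
  compat := fun f x y h => by rw [funext h]

/-- The universal congruence ∇. -/
def nabla (L : FirstOrder.Language.{0, 0}) (A : Type u) [L.Structure A] : AlgCon L A where
  r := fun _ _ => True
  refl := fun _ => trivial
  symm := fun _ => trivial
  trans := fun _ _ => trivial
  compat := fun _ _ _ _ => trivial

/-- Meet (intersection) of congruences. -/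
def inf (c d : AlgCon L A) : AlgCon L A where
  r := fun a b => c.r a b ∧ d.r a b
  refl := fun a => ⟨c.refl a, d.refl a⟩
  symm := fun h => ⟨c.symm h.1, d.symm h.2⟩
  trans := fun h1 h2 => ⟨c.trans h1.1 h2.1, d.trans h1.2 h2.2⟩
  compat := fun f x y h =>
    ⟨c.compat f x y fun i => (h i).1, d.compat f x y fun i => (h i).2⟩

/-- Relational composition of congruences (as a binary relation). -/
def comp (c d : AlgCon L A) (a b : A) : Prop := ∃ z, c.r a z ∧ d.r z b

/-- The congruence generated by a binary relation. -/
def conGen (L : FirstOrder.Language.{0, 0}) {A : Type u} [L.Structure A]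
    (R : A → A → Prop) : AlgCon L A where
  r := fun a b => ∀ c : AlgCon L A, (∀ x y, R x y → c.r x y) → c.r a b
  refl := fun a _ _ => AlgCon.refl _ a
  symm := fun h c hc => c.symm (h c hc)
  trans := fun h1 h2 c hc => c.trans (h1 c hc) (h2 c hc)
  compat := fun f x y h c hc => c.compat f x y fun i => h i c hc

/-- Join of congruences in the congruence lattice. -/
def sup (c d : AlgCon L A) : AlgCon L A :=
  conGen L (fun a b => c.r a b ∨ d.r a b)

end AlgCon

/-- The principal congruence θ(a⃗, b⃗) generated by the pairs (aᵢ, bᵢ). -/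
def thetaPairs {A : Type u} [L.Structure A] {n : ℕ} (a b : Fin n → A) : AlgCon L A :=
  AlgCon.conGen L (fun x y => ∃ i, x = a i ∧ y = b i)

/-- The congruence θ(S) generated by S × S. -/
def thetaSet {A : Type u} [L.Structure A] (S : Set A) : AlgCon L A :=
  AlgCon.conGen L (fun x y => x ∈ S ∧ y ∈ S)

/-- `[a⃗, b⃗] ∈ θ`: all pairs (aᵢ, bᵢ) belong to the congruence θ. -/
def inCon {A : Type u} [L.Structure A] {n : ℕ} (θ : AlgCon L A) (a b : Fin n → A) : Prop :=
  ∀ i, θ.r (a i) (b i)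

/-- θ and δ are complementary factor congruences: θ ∩ δ = Δ and θ ∘ δ = ∇. -/
def IsComplFC {A : Type u} [L.Structure A] (θ δ : AlgCon L A) : Prop :=
  θ.inf δ = AlgCon.delta L A ∧ ∀ a b : A, θ.comp δ a b

/-- The set of factor congruences of `A`. -/
def FC (L : FirstOrder.Language.{0, 0}) (A : Type u) [L.Structure A] : Set (AlgCon L A) :=
  {θ | ∃ δ, IsComplFC θ δ}

/-- `S` is a Boolean sublattice of the congruence lattice of `A`: it contains Δ and ∇,
is closed under meet and join, is distributive, and every element has a complement in `S`. -/
def IsBooleanSublattice {A : Type u} [L.Structure A] (S : Set (AlgCon L A)) : Prop :=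
  AlgCon.delta L A ∈ S ∧ AlgCon.nabla L A ∈ S ∧
  (∀ θ ∈ S, ∀ δ ∈ S, θ.inf δ ∈ S) ∧
  (∀ θ ∈ S, ∀ δ ∈ S, θ.sup δ ∈ S) ∧
  (∀ θ ∈ S, ∀ δ ∈ S, ∀ γ ∈ S, θ.inf (δ.sup γ) = (θ.inf δ).sup (θ.inf γ)) ∧
  (∀ θ ∈ S, ∃ δ ∈ S, θ.inf δ = AlgCon.delta L A ∧ θ.sup δ = AlgCon.nabla L A)

/-- An identity (equation between two terms in finitely many variables). -/
structure Identity (L : FirstOrder.Language.{0, 0}) where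
  nvars : ℕ
  lhs : L.Term (Fin nvars)
  rhs : L.Term (Fin nvars)

/-- An identity holds in an algebra. -/
def Identity.Holds (e : Identity L) (A : Type u) [L.Structure A] : Prop :=
  ∀ v : Fin e.nvars → A, e.lhs.realize v = e.rhs.realize v

/-- Membership of an algebra in the variety axiomatized by the set of identities `E`. -/
def InVariety (E : Set (Identity L)) (A : Type u) [L.Structure A] : Prop :=
  ∀ e ∈ E, e.Holds A

/-- The data of the closed terms 0₁, …, 0ₙ and 1₁, …, 1ₙ. -/
structure ZeroOneData (L : FirstOrder.Language.{0, 0}) where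
  n : ℕ
  npos : 0 < n
  zero : Fin n → L.Term Empty
  one : Fin n → L.Term Empty

/-- The interpretation of the tuple 0⃗ in an algebra. -/
def ZeroOneData.zeroA (Z : ZeroOneData L) (A : Type u) [L.Structure A] : Fin Z.n → A :=
  fun i => (Z.zero i).realize Empty.elim

/-- The interpretation of the tuple 1⃗ in an algebra. -/
def ZeroOneData.oneA (Z : ZeroOneData L) (A : Type u) [L.Structure A] : Fin Z.n → A :=
  fun i => (Z.one i).realize Empty.elim

/-- `V ⊨ (0⃗ ≈ 1⃗) → x ≈ y`: `V` is a variety with 0⃗ and 1⃗. -/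
def ZeroOneData.Separates (Z : ZeroOneData L) (E : Set (Identity L)) : Prop :=
  ∀ (A : Type u) [L.Structure A], InVariety E A →
    (∀ i, Z.zeroA A i = Z.oneA A i) → Subsingleton A

/-- Product structure on `A × B`. -/
instance prodStructure (A : Type u) (B : Type u) [L.Structure A] [L.Structure B] :
    L.Structure (A × B) where
  funMap := fun f x => (funMap f (fun i => (x i).1), funMap f (fun i => (x i).2))
  RelMap := fun r x => RelMap r (fun i => (x i).1) ∧ RelMap r (fun i => (x i).2)

/-- A witness that `e⃗` is a central element of `A`: an isomorphism
`τ : A ≅ A₁ × A₂` with `A₁, A₂ ∈ V` and `τ(e⃗) = [0⃗, 1⃗]`. -/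
structure CentralWitness (E : Set (Identity L)) (Z : ZeroOneData L)
    (A : Type u) [L.Structure A] (e : Fin Z.n → A) : Type (u + 1) where
  A₁ : Type u
  A₂ : Type u
  [s₁ : L.Structure A₁]
  [s₂ : L.Structure A₂]
  mem₁ : InVariety E A₁
  mem₂ : InVariety E A₂
  iso : A ≃[L] (A₁ × A₂)
  he : ∀ i, iso (e i) = (Z.zeroA A₁ i, Z.oneA A₂ i)

/-- A witness that `e⃗` and `f⃗` are complementary central elements of `A`. -/
structure ComplCentralWitness (E : Set (Identity L)) (Z : ZeroOneData L)
    (A : Type u) [L.Structure A] (e f : Fin Z.n → A) extends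
    CentralWitness E Z A e : Type (u + 1) where
  hf : ∀ i, iso (f i) = (Z.oneA A₁ i, Z.zeroA A₂ i)

/-- `e⃗` is a central element of `A`. -/
def IsCentral (E : Set (Identity L)) (Z : ZeroOneData L)
    (A : Type u) [L.Structure A] (e : Fin Z.n → A) : Prop :=
  Nonempty (CentralWitness E Z A e)

/-- `e⃗ ⋄_A f⃗`: `e⃗` and `f⃗` are complementary central elements of `A`. -/
def CentDiamond (E : Set (Identity L)) (Z : ZeroOneData L)
    (A : Type u) [L.Structure A] (e f : Fin Z.n → A) : Prop :=
  Nonempty (ComplCentralWitness E Z A e f)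

/-- `V` has Boolean factor congruences: for every `A ∈ V`, `FC(A)` is a Boolean
sublattice of `Con(A)`. -/
def HasBFC (E : Set (Identity L)) : Prop :=
  ∀ (A : Type u) [L.Structure A], InVariety E A → IsBooleanSublattice (FC L A)

/-- `V` is stable by complements: every homomorphism between members of `V`
preserves complementary central elements. -/
def StableByComplements (E : Set (Identity L)) (Z : ZeroOneData L) : Prop :=
  ∀ (A B : Type u) [L.Structure A] [L.Structure B], InVariety E A → InVariety E B →
    ∀ (f : A →[L] B) (e g : Fin Z.n → A), CentDiamond E Z A e g →
      CentDiamond E Z B (fun i => f (e i)) (fun i => f (g i))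

/-- A formula is existential: of the form ∃w⃗ ψ with ψ quantifier-free. -/
def IsExistentialForm {α : Type*} (φ : L.Formula α) : Prop :=
  ∃ (m : ℕ) (ψ : L.BoundedFormula α m), ψ.IsQF ∧ φ = ψ.exs

/-- The formula λ(z⃗, x, y) satisfies the condition (R): for all `A, B ∈ V`,
`A × B ⊨ λ([0⃗,1⃗], (a,c), (b,d))` iff `c = d`. -/
def RightFormulaWorks (E : Set (Identity L)) (Z : ZeroOneData L)
    (φ : L.Formula ((Fin Z.n) ⊕ (Fin 2))) : Prop :=
  ∀ (A B : Type u) [L.Structure A] [L.Structure B], InVariety E A → InVariety E B →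
    ∀ (a b : A) (c d : B),
      (φ.Realize (M := A × B)
        (Sum.elim (fun i => (Z.zeroA A i, Z.oneA B i)) ![(a, c), (b, d)]) ↔ c = d)

/-- The formula ρ(z⃗, x, y) satisfies the condition (L): for all `A, B ∈ V`,
`A × B ⊨ ρ([0⃗,1⃗], (a,c), (b,d))` iff `a = b`. -/
def LeftFormulaWorks (E : Set (Identity L)) (Z : ZeroOneData L)
    (φ : L.Formula ((Fin Z.n) ⊕ (Fin 2))) : Prop :=
  ∀ (A B : Type u) [L.Structure A] [L.Structure B], InVariety E A → InVariety E B →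
    ∀ (a b : A) (c d : B),
      (φ.Realize (M := A × B)
        (Sum.elim (fun i => (Z.zeroA A i, Z.oneA B i)) ![(a, c), (b, d)]) ↔ a = b)

/-- `V` has right existentially definable factor congruences. -/
def HasRexDFC (E : Set (Identity L)) (Z : ZeroOneData L) : Prop :=
  HasBFC.{u} E ∧ ∃ φ : L.Formula ((Fin Z.n) ⊕ (Fin 2)),
    IsExistentialForm φ ∧ RightFormulaWorks.{u} E Z φ

/-- `V` has left existentially definable factor congruences. -/
def HasLexDFC (E : Set (Identity L)) (Z : ZeroOneData L) : Prop :=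
  HasBFC.{u} E ∧ ∃ φ : L.Formula ((Fin Z.n) ⊕ (Fin 2)),
    IsExistentialForm φ ∧ LeftFormulaWorks.{u} E Z φ

/-- `(θ, δ)` is the pair of complementary factor congruences associated with the
central element `e⃗`, i.e. `θ ⋄ δ`, `[e⃗,0⃗] ∈ θ` and `[e⃗,1⃗] ∈ δ`. -/
def PairFor (Z : ZeroOneData L) (A : Type u) [L.Structure A]
    (e : Fin Z.n → A) (θ δ : AlgCon L A) : Prop :=
  IsComplFC θ δ ∧ inCon θ e (Z.zeroA A) ∧ inCon δ e (Z.oneA A)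

/-- `a⃗ = e⃗ ∧ f⃗` in the center: `[a⃗,0⃗] ∈ θ_{0,e} ∩ θ_{0,f}` and `[a⃗,1⃗] ∈ θ_{1,e} ∨ θ_{1,f}`. -/
def IsMeetOf (Z : ZeroOneData L) (A : Type u) [L.Structure A]
    (e f a : Fin Z.n → A) : Prop :=
  ∃ θ₀e θ₁e θ₀f θ₁f : AlgCon L A, PairFor Z A e θ₀e θ₁e ∧ PairFor Z A f θ₀f θ₁f ∧
    inCon (θ₀e.inf θ₀f) a (Z.zeroA A) ∧ inCon (θ₁e.sup θ₁f) a (Z.oneA A)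

/-- `a⃗ = e⃗ ∨ f⃗` in the center: `[a⃗,0⃗] ∈ θ_{0,e} ∨ θ_{0,f}` and `[a⃗,1⃗] ∈ θ_{1,e} ∩ θ_{1,f}`. -/
def IsJoinOf (Z : ZeroOneData L) (A : Type u) [L.Structure A]
    (e f a : Fin Z.n → A) : Prop :=
  ∃ θ₀e θ₁e θ₀f θ₁f : AlgCon L A, PairFor Z A e θ₀e θ₁e ∧ PairFor Z A f θ₀f θ₁f ∧
    inCon (θ₀e.sup θ₀f) a (Z.zeroA A) ∧ inCon (θ₁e.inf θ₁f) a (Z.oneA A)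

/-- `a⃗ = e⃗^c` in the center: `[a⃗,1⃗] ∈ θ_{0,e}` and `[a⃗,0⃗] ∈ θ_{1,e}`. -/
def IsComplOf (Z : ZeroOneData L) (A : Type u) [L.Structure A]
    (e a : Fin Z.n → A) : Prop :=
  ∃ θ₀e θ₁e : AlgCon L A, PairFor Z A e θ₀e θ₁e ∧
    inCon θ₀e a (Z.oneA A) ∧ inCon θ₁e a (Z.zeroA A)

section Quotient

variable {A : Type u} [L.Structure A]

/-- The setoid underlying a congruence. -/
def AlgCon.setoid (c : AlgCon L A) : Setoid A :=
  ⟨c.r, ⟨c.refl, fun h => c.symm h, fun h1 h2 => c.trans h1 h2⟩⟩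

/-- The quotient algebra `A/θ`. -/
def ConQuot (c : AlgCon L A) : Type u := Quotient c.setoid

/-- The class of `a` in `A/θ`. -/
def ConQuot.mk (c : AlgCon L A) (a : A) : ConQuot c := Quotient.mk c.setoid a

noncomputable instance conQuotStructure (c : AlgCon L A) : L.Structure (ConQuot c) where
  funMap := fun f x => ConQuot.mk c (funMap f (fun i => (Quotient.out (α := A) (s := c.setoid) (x i))))
  RelMap := fun r x => ∃ as : Fin _ → A, (∀ i, ConQuot.mk c (as i) = x i) ∧ RelMap r as

theorem conQuot_funMap_mk (c : AlgCon L A) {m : ℕ} (f : L.Functions m) (as : Fin m → A) :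
    funMap f (fun i => ConQuot.mk c (as i)) = ConQuot.mk c (funMap f as) := by
  show ConQuot.mk c _ = ConQuot.mk c _
  apply Quotient.sound
  apply c.compat
  intro i
  exact Quotient.mk_out (s := c.setoid) (as i)

/-- The canonical quotient homomorphism `A → A/θ`. -/
def conQuotMk (c : AlgCon L A) : A →[L] ConQuot c where
  toFun := ConQuot.mk c
  map_fun' := fun f x => (conQuot_funMap_mk c f x).symm
  map_rel' := fun _r x h => ⟨x, fun _ => rfl, h⟩

end Quotient

end Paper

/-!
(⇒) Under BFC the pair of factor congruences belonging to a central `e⃗` is unique, so for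
`τ : A ≅ A₁ × A₂` with `τ(e⃗) = [0⃗, 1⃗]`, `θ_{1,e}` is the kernel of `A → A₂`. An existential
formula goes up along the embedding `a ↦ (a₁, (a₂, [a]))` of `A₁ × A₂` into
`A₁ × (A₂ × (A₁ × A₂)/θ(1⃗, [0⃗, 1⃗]))`, which fixes `[0⃗, 1⃗]`; hence two elements with the same
second coordinate become equal in the quotient.

(⇐) Call a pair `(u, v)` of a product `C₀ × D₀` good if `([0⃗, 1⃗], u, v)` satisfies a finite
system of equations, with existentially quantified auxiliary variables, that forces equal second
coordinates in every product of two members of `V`. Good pairs form a congruence containing each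
`(1ᵢ, [0ᵢ, 1ᵢ])`. In `F × F`, `F` free in `V` on `x, y`, the hypothesis puts `((x, x), (y, x))`
in `θ(1⃗, [0⃗, 1⃗])`, so it is good, and the system witnessing this defines the factor congruence:
a homomorphism `F × F → C × D` sending it to `((a, c), (b, c))` transports the solution.
-/

namespace Paper

variable {L : FirstOrder.Language.{0, 0}}

namespace AlgCon

variable {A : Type u} {B : Type v} [L.Structure A] [L.Structure B]

instance : PartialOrder (AlgCon L A) where
  le c d := ∀ a b, c.r a b → d.r a b
  le_refl _ _ _ h := h
  le_trans _ _ _ h₁ h₂ a b h := h₂ a b (h₁ a b h)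
  le_antisymm _ _ h₁ h₂ := ext' fun a b => ⟨h₁ a b, h₂ a b⟩

theorem conGen_le {R : A → A → Prop} {c : AlgCon L A} (h : ∀ x y, R x y → c.r x y) :
    conGen L R ≤ c :=
  fun _ _ hab => hab c h

theorem rel_conGen {R : A → A → Prop} {x y : A} (h : R x y) : (conGen L R).r x y :=
  fun _ hc => hc _ _ h

theorem le_sup_left (c d : AlgCon L A) : c ≤ c.sup d :=
  fun _ _ h => rel_conGen (Or.inl h)

theorem le_sup_right (c d : AlgCon L A) : d ≤ c.sup d :=
  fun _ _ h => rel_conGen (Or.inr h)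

theorem inf_le_right (c d : AlgCon L A) : c.inf d ≤ d :=
  fun _ _ h => h.2

theorem delta_sup (c : AlgCon L A) : (delta L A).sup c = c :=
  le_antisymm (conGen_le fun a _ h => h.elim (fun hab => hab ▸ c.refl a) id) (le_sup_right _ _)

theorem inf_nabla (c : AlgCon L A) : c.inf (nabla L A) = c :=
  ext' fun _ _ => ⟨And.left, fun h => ⟨h, trivial⟩⟩

theorem inf_comm (c d : AlgCon L A) : c.inf d = d.inf c :=
  ext' fun _ _ => And.comm

theorem eq_nabla_of_le {c : AlgCon L A} (h : nabla L A ≤ c) : c = nabla L A :=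
  le_antisymm (fun _ _ _ => trivial) h

def comap (h : A →[L] B) (c : AlgCon L B) : AlgCon L A where
  r a b := c.r (h a) (h b)
  refl _ := c.refl _
  symm := c.symm
  trans := c.trans
  compat f x y hxy := by
    simp only [HomClass.map_fun]
    exact c.compat f _ _ hxy

def ker (h : A →[L] B) : AlgCon L A := comap h (delta L B)

theorem ker_rel {h : A →[L] B} {a b : A} : (ker h).r a b ↔ h a = h b := Iff.rfl

end AlgCon

theorem IsComplFC.symm {A : Type u} [L.Structure A] {θ δ : AlgCon L A} (h : IsComplFC θ δ) :
    IsComplFC δ θ := by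
  refine ⟨by rw [AlgCon.inf_comm]; exact h.1, fun a b => ?_⟩
  obtain ⟨z, hz₁, hz₂⟩ := h.2 b a
  exact ⟨z, δ.symm hz₂, θ.symm hz₁⟩

section ThetaPairs

variable {A : Type u} {B : Type v} [L.Structure A] [L.Structure B] {n : ℕ}

theorem thetaPairs_le {a b : Fin n → A} {c : AlgCon L A} (h : inCon c a b) :
    thetaPairs a b ≤ c :=
  AlgCon.conGen_le fun _ _ ⟨i, hx, hy⟩ => hx ▸ hy ▸ h i

theorem inCon_thetaPairs (a b : Fin n → A) : inCon (thetaPairs (L := L) a b) a b :=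
  fun i => AlgCon.rel_conGen ⟨i, rfl, rfl⟩

theorem rel_thetaPairs_map (h : A →[L] B) {a b : Fin n → A} {a' b' : Fin n → B}
    (ha : ∀ i, h (a i) = a' i) (hb : ∀ i, h (b i) = b' i) {x y : A}
    (hxy : (thetaPairs (L := L) a b).r x y) : (thetaPairs (L := L) a' b').r (h x) (h y) :=
  thetaPairs_le (c := AlgCon.comap h (thetaPairs a' b'))
    (fun i => by simpa only [AlgCon.comap, ha, hb] using inCon_thetaPairs a' b' i) x y hxy

end ThetaPairs

section Products

variable {A B C : Type u} [L.Structure A] [L.Structure B] [L.Structure C]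

def fstHom : (A × B) →[L] A where
  toFun := Prod.fst
  map_rel' _ _ h := h.1

def sndHom : (A × B) →[L] B where
  toFun := Prod.snd
  map_rel' _ _ h := h.2

def pairHom (f : C →[L] A) (g : C →[L] B) : C →[L] (A × B) where
  toFun c := (f c, g c)
  map_fun' φ x := by simp only [HomClass.map_fun]; rfl
  map_rel' r x h := ⟨HomClass.map_rel f r x h, HomClass.map_rel g r x h⟩

@[simp]
theorem fstHom_apply (p : A × B) : fstHom (L := L) p = p.1 := rfl

@[simp]
theorem sndHom_apply (p : A × B) : sndHom (L := L) p = p.2 := rfl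

@[simp]
theorem pairHom_apply (f : C →[L] A) (g : C →[L] B) (c : C) : pairHom f g c = (f c, g c) := rfl

def prodMap {A' B' : Type u} [L.Structure A'] [L.Structure B'] (f : A →[L] A') (g : B →[L] B') :
    (A × B) →[L] (A' × B') :=
  pairHom (f.comp fstHom) (g.comp sndHom)

theorem Term.realize_prod {α : Type*} (t : L.Term α) (v : α → A × B) :
    t.realize v = (t.realize (Prod.fst ∘ v), t.realize (Prod.snd ∘ v)) := by
  induction t with
  | var => rfl
  | func f ts ih => simp only [Term.realize, ih]; rfl

theorem realize_closed_prod (t : L.Term Empty) :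
    t.realize (Empty.elim : Empty → A × B) = (t.realize Empty.elim, t.realize Empty.elim) := by
  rw [Term.realize_prod]
  congr 2 <;> exact funext (fun e => e.elim)

theorem InVariety.prod {E : Set (Identity L)} (hA : InVariety E A) (hB : InVariety E B) :
    InVariety E (A × B) := by
  intro e he v
  rw [Term.realize_prod, Term.realize_prod, hA e he, hB e he]

theorem InVariety.of_surjective {E : Set (Identity L)} (hA : InVariety E A) (h : A →[L] B)
    (hs : Function.Surjective h) : InVariety E B := by
  intro e he v
  obtain ⟨v', rfl⟩ : ∃ v' : Fin e.nvars → A, h ∘ v' = v :=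
    ⟨fun i => (hs (v i)).choose, funext fun i => (hs (v i)).choose_spec⟩
  rw [HomClass.realize_term, HomClass.realize_term, hA e he]

end Products

namespace ZeroOneData

variable (Z : ZeroOneData L) {A B : Type u} [L.Structure A] [L.Structure B]

def zeroOneA (A B : Type u) [L.Structure A] [L.Structure B] : Fin Z.n → A × B :=
  fun i => (Z.zeroA A i, Z.oneA B i)

theorem zeroA_prod (i : Fin Z.n) : Z.zeroA (A × B) i = (Z.zeroA A i, Z.zeroA B i) :=
  realize_closed_prod _

theorem oneA_prod (i : Fin Z.n) : Z.oneA (A × B) i = (Z.oneA A i, Z.oneA B i) :=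
  realize_closed_prod _

theorem map_realize_closed (h : A →[L] B) (t : L.Term Empty) :
    h (t.realize Empty.elim) = t.realize Empty.elim := by
  rw [← HomClass.realize_term]
  exact congrArg t.realize (funext fun e => e.elim)

theorem map_zeroA (h : A →[L] B) (i : Fin Z.n) : h (Z.zeroA A i) = Z.zeroA B i :=
  map_realize_closed h _

theorem map_oneA (h : A →[L] B) (i : Fin Z.n) : h (Z.oneA A i) = Z.oneA B i :=
  map_realize_closed h _

end ZeroOneData

@[simp]
theorem conQuotMk_apply {A : Type u} [L.Structure A] (c : AlgCon L A) (a : A) :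
    conQuotMk c a = ConQuot.mk c a := rfl

theorem InVariety.conQuot {E : Set (Identity L)} {A : Type u} [L.Structure A]
    (hA : InVariety E A) (c : AlgCon L A) : InVariety E (ConQuot c) :=
  hA.of_surjective (conQuotMk c) fun q => ⟨_, Quotient.out_eq (s := c.setoid) q⟩

section FactorCongruences

variable {E : Set (Identity L)} {Z : ZeroOneData L} {A : Type u} [L.Structure A]

theorem thetaPairs_zeroA_oneA_eq_nabla (hsep : Z.Separates.{u} E) (hA : InVariety E A) :
    thetaPairs (L := L) (Z.zeroA A) (Z.oneA A) = AlgCon.nabla L A := by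
  set c := thetaPairs (L := L) (Z.zeroA A) (Z.oneA A)
  have : Subsingleton (ConQuot c) := hsep _ (hA.conQuot c) fun i => by
    rw [← Z.map_zeroA (conQuotMk c), ← Z.map_oneA (conQuotMk c)]
    exact Quotient.sound (inCon_thetaPairs _ _ i)
  exact AlgCon.eq_nabla_of_le fun a b _ => Quotient.exact (Subsingleton.elim (ConQuot.mk c a) _)

/-- Distributivity of `FC(A)` gives `δ = δ ∩ (θ ∨ δ') = δ ∩ δ'`, where `θ ∨ δ' = ∇` because it
identifies `0⃗` with `1⃗` through `e⃗`. -/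
theorem PairFor.le (hsep : Z.Separates.{u} E) (hbfc : HasBFC.{u} E) (hA : InVariety E A)
    {e : Fin Z.n → A} {θ δ θ' δ' : AlgCon L A} (h : PairFor Z A e θ δ)
    (h' : PairFor Z A e θ' δ') : δ ≤ δ' := by
  obtain ⟨hc, hθ, -⟩ := h
  obtain ⟨hc', -, hδ'⟩ := h'
  obtain ⟨-, -, -, -, hdist, -⟩ := hbfc A hA
  have hsup : θ.sup δ' = AlgCon.nabla L A := by
    apply AlgCon.eq_nabla_of_le
    rw [← thetaPairs_zeroA_oneA_eq_nabla hsep hA]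
    exact thetaPairs_le fun i => (θ.sup δ').trans
      ((θ.sup δ').symm (AlgCon.le_sup_left θ δ' _ _ (hθ i))) (AlgCon.le_sup_right θ δ' _ _ (hδ' i))
  have key := hdist δ ⟨θ, hc.symm⟩ θ ⟨δ, hc⟩ δ' ⟨θ', hc'.symm⟩
  rw [hsup, AlgCon.inf_nabla, AlgCon.inf_comm δ θ, hc.1, AlgCon.delta_sup] at key
  calc δ = δ.inf δ' := key
    _ ≤ δ' := AlgCon.inf_le_right δ δ'

theorem PairFor.snd_eq (hsep : Z.Separates.{u} E) (hbfc : HasBFC.{u} E) (hA : InVariety E A)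
    {e : Fin Z.n → A} {θ δ θ' δ' : AlgCon L A} (h : PairFor Z A e θ δ)
    (h' : PairFor Z A e θ' δ') : δ = δ' :=
  le_antisymm (h.le hsep hbfc hA h') (h'.le hsep hbfc hA h)

theorem pairFor_ker_of_equiv {A₁ A₂ : Type u} [L.Structure A₁] [L.Structure A₂]
    (τ : A ≃[L] A₁ × A₂) {e : Fin Z.n → A} (he : ∀ i, τ (e i) = Z.zeroOneA A₁ A₂ i) :
    PairFor Z A e (AlgCon.ker (fstHom.comp τ.toHom)) (AlgCon.ker (sndHom.comp τ.toHom)) := by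
  have h0 : ∀ i, τ (Z.zeroA A i) = (Z.zeroA A₁ i, Z.zeroA A₂ i) := fun i => by
    rw [← Z.zeroA_prod, ← Z.map_zeroA τ.toHom, Equiv.coe_toHom]
  have h1 : ∀ i, τ (Z.oneA A i) = (Z.oneA A₁ i, Z.oneA A₂ i) := fun i => by
    rw [← Z.oneA_prod, ← Z.map_oneA τ.toHom, Equiv.coe_toHom]
  refine ⟨⟨AlgCon.ext' fun a b => ⟨fun hab => τ.injective (Prod.ext hab.1 hab.2), ?_⟩, ?_⟩, ?_, ?_⟩
  · rintro rfl
    exact ⟨rfl, rfl⟩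
  · intro a b
    refine ⟨τ.symm ((τ a).1, (τ b).2), ?_, ?_⟩ <;>
      simp [AlgCon.ker_rel]
  · intro i
    simp [AlgCon.ker_rel, he i, h0 i, ZeroOneData.zeroOneA]
  · intro i
    simp [AlgCon.ker_rel, he i, h1 i, ZeroOneData.zeroOneA]

end FactorCongruences

section Forward

variable {E : Set (Identity L)} {Z : ZeroOneData L}

theorem IsExistentialForm.isExistential {α : Type*} {φ : L.Formula α}
    (h : IsExistentialForm φ) : BoundedFormula.IsExistential φ := by
  obtain ⟨m, ψ, hψ, rfl⟩ := h
  suffices ∀ {m} (ψ : L.BoundedFormula α m), ψ.IsExistential → BoundedFormula.IsExistential ψ.exs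
    from this ψ hψ.isExistential
  intro m
  induction m with
  | zero => exact fun _ h => h
  | succ m ih => exact fun _ h => ih _ h.ex

theorem IsExistentialForm.realize_map [L.IsAlgebraic] {α : Type*} {φ : L.Formula α}
    (hφ : IsExistentialForm φ) {M N : Type u} [L.Structure M] [L.Structure N] (g : M →[L] N)
    (hg : Function.Injective g) {v : α → M} (h : φ.Realize v) : φ.Realize (g ∘ v) := by
  have := hφ.isExistential.realize_embedding (Embedding.ofInjective hg) (xs := default) h
  rwa [Embedding.coeFn_ofInjective, Subsingleton.elim (g ∘ default) default] at this

theorem rel_thetaPairs_of_snd_eq [L.IsAlgebraic] {φ : L.Formula (Fin Z.n ⊕ Fin 2)}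
    (hφ : IsExistentialForm φ) (hR : RightFormulaWorks.{u} E Z φ)
    {A₁ A₂ : Type u} [L.Structure A₁] [L.Structure A₂] (h₁ : InVariety E A₁)
    (h₂ : InVariety E A₂) {u v : A₁ × A₂} (huv : u.2 = v.2) :
    (thetaPairs (L := L) (Z.oneA (A₁ × A₂)) (Z.zeroOneA A₁ A₂)).r u v := by
  set c := thetaPairs (L := L) (Z.oneA (A₁ × A₂)) (Z.zeroOneA A₁ A₂)
  let g : A₁ × A₂ →[L] A₁ × (A₂ × ConQuot c) := pairHom fstHom (pairHom sndHom (conQuotMk c))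
  have hg : Function.Injective g := fun p q h => by
    simpa [g] using congrArg (fun x => (x.1, x.2.1)) h
  have hmk : ∀ i, ConQuot.mk c (Z.zeroOneA A₁ A₂ i) = Z.oneA (ConQuot c) i := fun i => by
    rw [← Z.map_oneA (conQuotMk c)]
    exact (Quotient.sound (inCon_thetaPairs _ _ i)).symm
  have hval : g ∘ Sum.elim (Z.zeroOneA A₁ A₂) ![u, v] =
      Sum.elim (Z.zeroOneA A₁ (A₂ × ConQuot c))
        ![(u.1, (u.2, ConQuot.mk c u)), (v.1, (v.2, ConQuot.mk c v))] := by
    ext1 (i | j)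
    · simp [g, ZeroOneData.zeroOneA, Z.oneA_prod, ← hmk]
    · fin_cases j <;> rfl
  have hreal := hφ.realize_map g hg ((hR A₁ A₂ h₁ h₂ u.1 v.1 u.2 v.2).2 huv)
  change φ.Realize (g ∘ Sum.elim (Z.zeroOneA A₁ A₂) ![u, v]) at hreal
  rw [hval] at hreal
  have hQ : InVariety E (A₂ × ConQuot c) := h₂.prod ((h₁.prod h₂).conQuot c)
  exact Quotient.exact (congrArg Prod.snd ((hR A₁ _ h₁ hQ _ _ _ _).1 hreal))

theorem eq_thetaPairs_of_rightFormulaWorks [L.IsAlgebraic] (hsep : Z.Separates.{u} E)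
    (hbfc : HasBFC.{u} E) {φ : L.Formula (Fin Z.n ⊕ Fin 2)} (hφ : IsExistentialForm φ)
    (hR : RightFormulaWorks.{u} E Z φ) {A : Type u} [L.Structure A] (hA : InVariety E A)
    {e : Fin Z.n → A} (he : IsCentral E Z A e) {θ δ : AlgCon L A} (hp : PairFor Z A e θ δ) :
    δ = thetaPairs (L := L) (Z.oneA A) e := by
  obtain ⟨⟨A₁, A₂, h₁, h₂, τ, hτe⟩⟩ := he
  rw [hp.snd_eq hsep hbfc hA (pairFor_ker_of_equiv τ hτe)]
  refine le_antisymm (fun a b hab => ?_) (thetaPairs_le fun i => ?_)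
  · have := rel_thetaPairs_of_snd_eq hφ hR h₁ h₂ (u := τ a) (v := τ b) hab
    simpa using rel_thetaPairs_map τ.symm.toHom (Z.map_oneA _)
      (fun i => by rw [← τ.symm_apply_apply (e i), hτe i]; rfl) this
  · show (τ (Z.oneA A i)).2 = (τ (e i)).2
    rw [hτe i, ← Equiv.coe_toHom, Z.map_oneA, Z.oneA_prod]

end Forward

section FreeAlgebra

variable (E : Set (Identity L))

instance termStructure (α : Type*) : L.Structure (L.Term α) where
  funMap := Term.func
  RelMap _ _ := False

theorem Term.realize_eq_subst {α β : Type*} (t : L.Term β) (σ : β → L.Term α) :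
    t.realize σ = t.subst σ := by
  induction t with
  | var => rfl
  | func f ts ih => exact congrArg (Term.func f) (funext ih)

def evalHom {α : Type*} {A : Type u} [L.Structure A] (v : α → A) : L.Term α →[L] A where
  toFun t := t.realize v
  map_rel' _ _ h := h.elim

@[simp]
theorem evalHom_apply {α : Type*} {A : Type u} [L.Structure A] (v : α → A) (t : L.Term α) :
    evalHom (L := L) v t = t.realize v := rfl

def varietyCon (α : Type u) : AlgCon L (L.Term α) :=
  AlgCon.conGen L fun s t =>
    ∃ e ∈ E, ∃ σ : Fin e.nvars → L.Term α, s = e.lhs.subst σ ∧ t = e.rhs.subst σ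

abbrev FreeAlg (α : Type u) : Type u := ConQuot (varietyCon E α)

variable {E}

theorem varietyCon_le_ker {α : Type u} {A : Type u} [L.Structure A] (hA : InVariety E A)
    (v : α → A) : varietyCon E α ≤ AlgCon.ker (evalHom v) :=
  AlgCon.conGen_le fun _ _ ⟨e, he, σ, hs, ht⟩ => by
    rw [AlgCon.ker_rel, evalHom_apply, evalHom_apply, hs, ht, Term.realize_subst,
      Term.realize_subst]
    exact hA e he _

theorem inVariety_freeAlg (α : Type u) : InVariety E (FreeAlg E α) := by
  intro e he v
  obtain ⟨σ, rfl⟩ : ∃ σ : Fin e.nvars → L.Term α, conQuotMk _ ∘ σ = v :=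
    ⟨fun i => Quotient.out (s := (varietyCon E α).setoid) (v i),
      funext fun i => Quotient.out_eq (s := (varietyCon E α).setoid) (v i)⟩
  rw [HomClass.realize_term, HomClass.realize_term, Term.realize_eq_subst, Term.realize_eq_subst]
  exact Quotient.sound (AlgCon.rel_conGen ⟨e, he, σ, rfl, rfl⟩)

def freeLift {α : Type u} {A : Type u} [L.Structure A] [L.IsAlgebraic] (hA : InVariety E A)
    (v : α → A) : FreeAlg E α →[L] A where
  toFun := Quotient.lift (s := (varietyCon E α).setoid) (fun t => t.realize v)
    fun s t (h : (varietyCon E α).r s t) => varietyCon_le_ker hA v s t h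
  map_fun' f x := by
    have hx : (fun i => ConQuot.mk _ (Quotient.out (s := (varietyCon E α).setoid) (x i))) = x :=
      funext fun i => Quotient.out_eq (s := (varietyCon E α).setoid) (x i)
    conv_rhs => rw [← hx]
    rfl
  map_rel' r _ _ := isEmptyElim r

end FreeAlgebra

section EquationSystems

def EqsHold {I α M : Type*} [L.Structure M] (eqs : I → L.Term α × L.Term α) (val : α → M) :
    Prop :=
  ∀ i, (eqs i).1.realize val = (eqs i).2.realize val

def relabelEqs {I α β : Type*} (σ : α → β) (eqs : I → L.Term α × L.Term α) :
    I → L.Term β × L.Term β :=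
  fun i => ((eqs i).1.relabel σ, (eqs i).2.relabel σ)

section EqsHold

variable {I J α β M : Type*} [L.Structure M]

theorem eqsHold_relabelEqs (σ : α → β) (eqs : I → L.Term α × L.Term α) (val : β → M) :
    EqsHold (relabelEqs σ eqs) val ↔ EqsHold eqs (val ∘ σ) := by
  simp only [EqsHold, relabelEqs, Term.realize_relabel]

theorem eqsHold_sumElim (e₁ : I → L.Term α × L.Term α) (e₂ : J → L.Term α × L.Term α)
    (val : α → M) : EqsHold (Sum.elim e₁ e₂) val ↔ EqsHold e₁ val ∧ EqsHold e₂ val :=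
  Sum.forall

theorem eqsHold_sigma {K : Type*} {I : K → Type*} (e : (Σ k, I k) → L.Term α × L.Term α)
    (val : α → M) : EqsHold e val ↔ ∀ k, EqsHold (fun i => e ⟨k, i⟩) val :=
  Sigma.forall

theorem EqsHold.map {N : Type*} [L.Structure N] {eqs : I → L.Term α × L.Term α} {val : α → M}
    (h : EqsHold eqs val) (g : M →[L] N) : EqsHold eqs (g ∘ val) :=
  fun i => by rw [HomClass.realize_term, HomClass.realize_term, h i]

end EqsHold

/-- A finite system of equations in the variables `V` and the auxiliary variables `W`; it stands
for the existential formula `∃ w⃗, ⋀ᵢ lhsᵢ = rhsᵢ`. -/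
structure EqSystem (L : FirstOrder.Language.{0, 0}) (V : Type) where
  W : Type
  [finite_W : Finite W]
  I : Type
  [finite_I : Finite I]
  eqs : I → L.Term (V ⊕ W) × L.Term (V ⊕ W)

attribute [instance] EqSystem.finite_W EqSystem.finite_I

namespace EqSystem

section

variable {V : Type} (S : EqSystem L V) {M : Type*} [L.Structure M]

def Sat (v : V → M) : Prop := ∃ w : S.W → M, EqsHold S.eqs (Sum.elim v w)

noncomputable def toFormula : L.Formula V :=
  (Formula.iInf fun i => Term.equal (S.eqs i).1 (S.eqs i).2).iExs S.W

theorem realize_toFormula (v : V → M) : S.toFormula.Realize v ↔ S.Sat v := by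
  simp only [toFormula, Formula.realize_iExs, Formula.realize_iInf, Formula.realize_equal, Sat,
    EqsHold]

theorem isExistentialForm_toFormula : IsExistentialForm S.toFormula := by
  have hqf : ∀ l : List (L.BoundedFormula (V ⊕ S.W) 0), (∀ φ ∈ l, φ.IsQF) →
      (l.foldr (· ⊓ ·) ⊤).IsQF := by
    intro l hl
    induction l with
    | nil => exact BoundedFormula.IsQF.top
    | cons φ l ih =>
      exact (hl φ List.mem_cons_self).inf (ih fun ψ hψ => hl ψ (List.mem_cons_of_mem φ hψ))
  refine ⟨_, _, BoundedFormula.IsQF.relabel (hqf _ ?_) _, rfl⟩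
  simp only [List.mem_map]
  rintro _ ⟨i, -, rfl⟩
  exact (BoundedFormula.IsAtomic.equal _ _).isQF

theorem Sat.map {N : Type*} [L.Structure N] {S : EqSystem L V} {v : V → M} (h : S.Sat v)
    (g : M →[L] N) : S.Sat (g ∘ v) := by
  obtain ⟨w, hw⟩ := h
  exact ⟨g ∘ w, by simpa only [Sum.comp_elim] using hw.map g⟩

end

variable {n : ℕ} {M : Type*} [L.Structure M]

/-- In a system over `Fin n ⊕ Fin 2` the variables `inl (inl i)` are `z⃗`, `inl (inr 0)` is `x` and
`inl (inr 1)` is `y`; the auxiliary variables are `inr w`. -/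
def xySubst {W W' : Type} (x y : (Fin n ⊕ Fin 2) ⊕ W') (ι : W → W') :
    (Fin n ⊕ Fin 2) ⊕ W → (Fin n ⊕ Fin 2) ⊕ W' :=
  Sum.elim (Sum.elim (Sum.inl ∘ Sum.inl) ![x, y]) (Sum.inr ∘ ι)

theorem comp_xySubst {W W' : Type} (val : (Fin n ⊕ Fin 2) ⊕ W' → M)
    (x y : (Fin n ⊕ Fin 2) ⊕ W') (ι : W → W') :
    val ∘ xySubst x y ι =
      Sum.elim (Sum.elim (fun i => val (.inl (.inl i))) ![val x, val y]) (val ∘ Sum.inr ∘ ι) := by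
  ext1 (i | _)
  · rcases i with i | j
    · rfl
    · fin_cases j <;> rfl
  · rfl

def substEqs (S : EqSystem L (Fin n ⊕ Fin 2)) {W' : Type} (x y : (Fin n ⊕ Fin 2) ⊕ W')
    (ι : S.W → W') : S.I → L.Term ((Fin n ⊕ Fin 2) ⊕ W') × L.Term ((Fin n ⊕ Fin 2) ⊕ W') :=
  relabelEqs (xySubst x y ι) S.eqs

theorem eqsHold_substEqs (S : EqSystem L (Fin n ⊕ Fin 2)) {W' : Type}
    (x y : (Fin n ⊕ Fin 2) ⊕ W') (ι : S.W → W') (val : (Fin n ⊕ Fin 2) ⊕ W' → M) :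
    EqsHold (S.substEqs x y ι) val ↔ EqsHold S.eqs
      (Sum.elim (Sum.elim (fun i => val (.inl (.inl i))) ![val x, val y]) (val ∘ Sum.inr ∘ ι)) := by
  rw [substEqs, eqsHold_relabelEqs, comp_xySubst]

def eqXY : EqSystem L (Fin n ⊕ Fin 2) where
  W := Empty
  I := Unit
  eqs _ := (var (.inl (.inr 0)), var (.inl (.inr 1)))

theorem sat_eqXY {z : Fin n → M} {u v : M} :
    (eqXY (L := L)).Sat (Sum.elim z ![u, v]) ↔ u = v :=
  ⟨fun ⟨_, h⟩ => h (), fun h => ⟨Empty.elim, fun _ => h⟩⟩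

def swap (S : EqSystem L (Fin n ⊕ Fin 2)) : EqSystem L (Fin n ⊕ Fin 2) where
  W := S.W
  I := S.I
  eqs := S.substEqs (.inl (.inr 1)) (.inl (.inr 0)) id

theorem sat_swap (S : EqSystem L (Fin n ⊕ Fin 2)) {z : Fin n → M} {u v : M} :
    S.swap.Sat (Sum.elim z ![u, v]) ↔ S.Sat (Sum.elim z ![v, u]) := by
  simp only [Sat, swap, eqsHold_substEqs]
  exact Iff.rfl

def trans (S T : EqSystem L (Fin n ⊕ Fin 2)) : EqSystem L (Fin n ⊕ Fin 2) where
  W := Unit ⊕ S.W ⊕ T.W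
  I := S.I ⊕ T.I
  eqs := Sum.elim (S.substEqs (.inl (.inr 0)) (.inr (.inl ())) (Sum.inr ∘ Sum.inl))
    (T.substEqs (.inr (.inl ())) (.inl (.inr 1)) (Sum.inr ∘ Sum.inr))

theorem sat_trans (S T : EqSystem L (Fin n ⊕ Fin 2)) {z : Fin n → M} {u v : M} :
    (S.trans T).Sat (Sum.elim z ![u, v]) ↔
      ∃ m, S.Sat (Sum.elim z ![u, m]) ∧ T.Sat (Sum.elim z ![m, v]) := by
  simp only [Sat, trans, eqsHold_sumElim, eqsHold_substEqs]
  constructor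
  · rintro ⟨w, h₁, h₂⟩
    exact ⟨w (.inl ()), ⟨_, h₁⟩, ⟨_, h₂⟩⟩
  · rintro ⟨m, ⟨w₁, h₁⟩, ⟨w₂, h₂⟩⟩
    exact ⟨Sum.elim (fun _ => m) (Sum.elim w₁ w₂), h₁, h₂⟩

def func {m : ℕ} (f : L.Functions m) (S : Fin m → EqSystem L (Fin n ⊕ Fin 2)) :
    EqSystem L (Fin n ⊕ Fin 2) where
  W := (Fin m × Fin 2) ⊕ Σ k, (S k).W
  I := Fin 2 ⊕ Σ k, (S k).I
  eqs := Sum.elim (fun j => (var (.inl (.inr j)), Term.func f fun k => var (.inr (.inl (k, j)))))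
    fun p => (S p.1).substEqs (.inr (.inl (p.1, 0))) (.inr (.inl (p.1, 1)))
      (fun w => .inr ⟨p.1, w⟩) p.2

theorem sat_func {m : ℕ} (f : L.Functions m) (S : Fin m → EqSystem L (Fin n ⊕ Fin 2))
    {z : Fin n → M} {u v : M} :
    (func f S).Sat (Sum.elim z ![u, v]) ↔ ∃ x y : Fin m → M,
      u = funMap f x ∧ v = funMap f y ∧ ∀ k, (S k).Sat (Sum.elim z ![x k, y k]) := by
  simp only [Sat, func, eqsHold_sumElim, eqsHold_sigma, eqsHold_substEqs]
  constructor
  · rintro ⟨w, hxy, hS⟩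
    exact ⟨fun k => w (.inl (k, 0)), fun k => w (.inl (k, 1)), hxy 0, hxy 1, fun k => ⟨_, hS k⟩⟩
  · rintro ⟨x, y, rfl, rfl, hS⟩
    choose w hw using hS
    refine ⟨Sum.elim (fun p => ![x p.1, y p.1] p.2) (fun p => w p.1 p.2), ?_, hw⟩
    intro j
    fin_cases j <;> rfl

def gen (Z : ZeroOneData L) (i : Fin Z.n) : EqSystem L (Fin Z.n ⊕ Fin 2) where
  W := Empty
  I := Fin 2
  eqs := ![(var (.inl (.inr 0)), (Z.one i).relabel Empty.elim),
    (var (.inl (.inr 1)), var (.inl (.inl i)))]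

theorem sat_gen (Z : ZeroOneData L) (i : Fin Z.n) {z : Fin Z.n → M} {u v : M} :
    (gen Z i).Sat (Sum.elim z ![u, v]) ↔ u = Z.oneA M i ∧ v = z i := by
  simp only [Sat, gen, EqsHold, Fin.forall_fin_two]
  simp [Term.realize_relabel, ZeroOneData.oneA, Subsingleton.elim _ (Empty.elim : Empty → M)]

end EqSystem

end EquationSystems

section Backward

variable {E : Set (Identity L)} {Z : ZeroOneData L}

def EqSystem.ForcesSndEq (E : Set (Identity L)) (Z : ZeroOneData L)
    (S : EqSystem L (Fin Z.n ⊕ Fin 2)) : Prop :=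
  ∀ (C D : Type u) [L.Structure C] [L.Structure D], InVariety E C → InVariety E D →
    ∀ u v : C × D, S.Sat (Sum.elim (Z.zeroOneA C D) ![u, v]) → u.2 = v.2

def sndEqCon (E : Set (Identity L)) (Z : ZeroOneData L) (C₀ D₀ : Type u) [L.Structure C₀]
    [L.Structure D₀] : AlgCon L (C₀ × D₀) where
  r u v := ∃ S : EqSystem L (Fin Z.n ⊕ Fin 2),
    S.ForcesSndEq.{u} E Z ∧ S.Sat (Sum.elim (Z.zeroOneA C₀ D₀) ![u, v])
  refl _ := ⟨EqSystem.eqXY, fun _ _ _ _ _ _ _ _ h => by rw [EqSystem.sat_eqXY.1 h],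
    EqSystem.sat_eqXY.2 rfl⟩
  symm := fun ⟨S, hS, h⟩ => ⟨S.swap,
    fun C D _ _ hC hD _ _ h' => (hS C D hC hD _ _ (S.sat_swap.1 h')).symm, S.sat_swap.2 h⟩
  trans := fun ⟨S, hS, h⟩ ⟨T, hT, h'⟩ => ⟨S.trans T, fun C D _ _ hC hD _ _ h'' => by
      obtain ⟨_, h₁, h₂⟩ := (S.sat_trans T).1 h''
      exact (hS C D hC hD _ _ h₁).trans (hT C D hC hD _ _ h₂),
    (S.sat_trans T).2 ⟨_, h, h'⟩⟩
  compat f x y h := by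
    choose S hS hsat using h
    refine ⟨EqSystem.func f S, fun C D _ _ hC hD _ _ h' => ?_,
      (EqSystem.sat_func f S).2 ⟨x, y, rfl, rfl, hsat⟩⟩
    obtain ⟨x', y', rfl, rfl, h''⟩ := (EqSystem.sat_func f S).1 h'
    exact congrArg (funMap f) (funext fun k => hS k C D hC hD _ _ (h'' k))

theorem thetaPairs_le_sndEqCon (C₀ D₀ : Type u) [L.Structure C₀] [L.Structure D₀] :
    thetaPairs (L := L) (Z.oneA (C₀ × D₀)) (Z.zeroOneA C₀ D₀) ≤ sndEqCon E Z C₀ D₀ :=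
  thetaPairs_le fun i => ⟨EqSystem.gen Z i, fun C D _ _ _ _ u v h => by
      obtain ⟨rfl, rfl⟩ := (EqSystem.sat_gen Z i).1 h
      simp [Z.oneA_prod, ZeroOneData.zeroOneA],
    (EqSystem.sat_gen Z i).2 ⟨rfl, rfl⟩⟩

def freeGen (E : Set (Identity L)) (j : Fin 2) : FreeAlg E (ULift.{u} (Fin 2)) :=
  ConQuot.mk _ (var (ULift.up j))

theorem exists_forcesSndEq_sat_freeGen
    (h : ∀ (A : Type u) [L.Structure A], InVariety E A → ∀ e : Fin Z.n → A, IsCentral E Z A e →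
      ∀ θ δ : AlgCon L A, PairFor Z A e θ δ → δ = thetaPairs (L := L) (Z.oneA A) e) :
    ∃ S : EqSystem L (Fin Z.n ⊕ Fin 2), S.ForcesSndEq.{u} E Z ∧ S.Sat (Sum.elim (Z.zeroOneA _ _)
      ![(freeGen.{u} E 0, freeGen.{u} E 0), (freeGen.{u} E 1, freeGen.{u} E 0)]) := by
  set F := FreeAlg E (ULift.{u} (Fin 2))
  have hF : InVariety E F := inVariety_freeAlg _
  have hker := h (F × F) (hF.prod hF) (Z.zeroOneA F F)
    ⟨⟨F, F, hF, hF, Language.Equiv.refl L _, fun _ => rfl⟩⟩ _ _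
    (pairFor_ker_of_equiv (Language.Equiv.refl L (F × F)) fun _ => rfl)
  refine thetaPairs_le_sndEqCon F F _ _ ?_
  rw [← hker]
  rfl

theorem EqSystem.Sat.of_freeGen [L.IsAlgebraic] {S : EqSystem L (Fin Z.n ⊕ Fin 2)}
    (hS : S.Sat (Sum.elim (Z.zeroOneA _ _)
      ![(freeGen.{u} E 0, freeGen.{u} E 0), (freeGen.{u} E 1, freeGen.{u} E 0)]))
    {C D : Type u} [L.Structure C] [L.Structure D] (hC : InVariety E C) (hD : InVariety E D)
    (a b : C) (c : D) : S.Sat (Sum.elim (Z.zeroOneA C D) ![(a, c), (b, c)]) := by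
  convert hS.map (prodMap (freeLift hC fun i => ![a, b] i.down) (freeLift hD fun _ => c)) using 1
  ext1 (i | j)
  · simp [prodMap, ZeroOneData.zeroOneA, Z.map_zeroA, Z.map_oneA]
  · fin_cases j <;> rfl

theorem hasRexDFC_of_forall_eq_thetaPairs [L.IsAlgebraic] (hbfc : HasBFC.{u} E)
    (h : ∀ (A : Type u) [L.Structure A], InVariety E A → ∀ e : Fin Z.n → A, IsCentral E Z A e →
      ∀ θ δ : AlgCon L A, PairFor Z A e θ δ → δ = thetaPairs (L := L) (Z.oneA A) e) :
    HasRexDFC.{u} E Z := by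
  obtain ⟨S, hS, hsat⟩ := exists_forcesSndEq_sat_freeGen h
  refine ⟨hbfc, S.toFormula, S.isExistentialForm_toFormula, fun C D _ _ hC hD a b c d => ?_⟩
  rw [S.realize_toFormula]
  exact ⟨hS C D hC hD (a, c) (b, d), by rintro rfl; exact hsat.of_freeGen hC hD a b c⟩

end Backward

end Paper

open Paper

theorem statement1_general (L : FirstOrder.Language.{0, 0}) [L.IsAlgebraic]
    (E : Set (Identity L)) (Z : ZeroOneData L)
    (hsep : ZeroOneData.Separates.{u} Z E) (hbfc : HasBFC.{u} E) :
    HasRexDFC.{u} E Z ↔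
      ∀ (A : Type u) [L.Structure A], InVariety E A →
        ∀ e : Fin Z.n → A, IsCentral E Z A e →
          ∀ θ δ : AlgCon L A, PairFor Z A e θ δ → δ = thetaPairs (L := L) (Z.oneA A) e :=
  ⟨fun ⟨_, _, hφ, hR⟩ _ _ hA _ he _ _ hp =>
      eq_thetaPairs_of_rightFormulaWorks hsep hbfc hφ hR hA he hp,
    hasRexDFC_of_forall_eq_thetaPairs hbfc⟩

/-- A variety with 0⃗ and 1⃗ having BFC has RexDFC iff for every
`A ∈ V` and every central element `e⃗`, the factor congruence θ_{1,e} equals the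
principal congruence θ^A(1⃗, e⃗). -/
theorem statement1 (L : FirstOrder.Language.{0, 0}) [L.IsAlgebraic]
    [Finite (Σ n, L.Functions n)]
    (E : Set (Identity L)) (Z : ZeroOneData L)
    (hsep : ZeroOneData.Separates.{u} Z E) (hbfc : HasBFC.{u} E) :
    HasRexDFC.{u} E Z ↔
      ∀ (A : Type u) [L.Structure A], InVariety E A →
        ∀ e : Fin Z.n → A, IsCentral E Z A e →
          ∀ θ δ : AlgCon L A, PairFor Z A e θ δ → δ = thetaPairs (L := L) (Z.oneA A) e :=
  statement1_general L E Z hsep hbfc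
end

section
/- Every variety V with right existentially definable factor congruences (RexDFC) that is stable by complements has the Fraser–Horn property: for all A, B ∈ V and every congruence γ of A×B there are congruences γ₁ of A and γ₂ of B with γ = γ₁×γ₂, where γ₁×γ₂ = {((a,b),(c,d)) : (a,c) ∈ γ₁ and (b,d) ∈ γ₂}. -/
open FirstOrder FirstOrder.Language FirstOrder.Language.Structure

universe u v w

open Paper

section FHAux

variable {L : FirstOrder.Language.{0, 0}}

/-- Term realization transfers along a function commuting with the operations. -/
theorem fh_term_transfer {M N : Type u} [L.Structure M] [L.Structure N]
    (g : M → N)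
    (hg : ∀ {m : ℕ} (f : L.Functions m) (x : Fin m → M),
      g (funMap f x) = funMap f (fun i => g (x i)))
    {β : Type} (t : L.Term β) (v : β → M) :
    t.realize (fun b => g (v b)) = g (t.realize v) := by
  induction t with
  | var k => rfl
  | func f ts ih =>
      rw [Term.realize_func, Term.realize_func, hg]
      exact congrArg _ (funext fun i => ih i)

/-- Quantifier-free formulas transfer along injective functions commuting with
the operations (in an algebraic language). -/
theorem fh_qf_transfer [halg : L.IsAlgebraic] {M N : Type u} [L.Structure M] [L.Structure N]
    (g : M → N) (hinj : Function.Injective g)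
    (hg : ∀ {m : ℕ} (f : L.Functions m) (x : Fin m → M),
      g (funMap f x) = funMap f (fun i => g (x i)))
    {α : Type} {n : ℕ} {ψ : L.BoundedFormula α n} (hqf : ψ.IsQF)
    (v : α → M) (xs : Fin n → M) :
    ψ.Realize (fun a => g (v a)) (fun i => g (xs i)) ↔ ψ.Realize v xs := by
  induction hqf with
  | falsum => exact Iff.rfl
  | of_isAtomic h =>
      cases h with
      | equal t₁ t₂ =>
          rw [BoundedFormula.realize_bdEqual, BoundedFormula.realize_bdEqual]
          have hs : (Sum.elim (fun a => g (v a)) (fun i => g (xs i)) : α ⊕ Fin n → N)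
              = fun x => g (Sum.elim v xs x) := funext (fun x => by cases x <;> rfl)
          rw [hs, fh_term_transfer g hg, fh_term_transfer g hg]
          exact ⟨fun h => hinj h, fun h => congrArg g h⟩
      | rel R ts => exact ((halg _).false R).elim
  | imp h₁ h₂ ih₁ ih₂ =>
      rw [BoundedFormula.realize_imp, BoundedFormula.realize_imp, ih₁, ih₂]

/-- Realization of terms in a product algebra is componentwise. -/
theorem fh_prod_term_realize {A B : Type u} [L.Structure A] [L.Structure B]
    {β : Type} (t : L.Term β) (v : β → A × B) :
    t.realize v = (t.realize (fun b => (v b).1), t.realize (fun b => (v b).2)) := by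
  induction t with
  | var k => rfl
  | func f ts ih =>
      rw [Term.realize_func, Term.realize_func, Term.realize_func, Prod.ext_iff]
      exact ⟨congrArg (funMap f) (funext fun i => congrArg Prod.fst (ih i)),
        congrArg (funMap f) (funext fun i => congrArg Prod.snd (ih i))⟩

theorem fh_zeroA_prod (Z : ZeroOneData L) (A B : Type u) [L.Structure A] [L.Structure B]
    (i : Fin Z.n) : Z.zeroA (A × B) i = (Z.zeroA A i, Z.zeroA B i) := by
  show (Z.zero i).realize Empty.elim = _
  rw [fh_prod_term_realize]
  exact congrArg₂ Prod.mk
    (congrArg (fun w => (Z.zero i).realize w) (funext fun x => x.elim))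
    (congrArg (fun w => (Z.zero i).realize w) (funext fun x => x.elim))

theorem fh_oneA_prod (Z : ZeroOneData L) (A B : Type u) [L.Structure A] [L.Structure B]
    (i : Fin Z.n) : Z.oneA (A × B) i = (Z.oneA A i, Z.oneA B i) := by
  show (Z.one i).realize Empty.elim = _
  rw [fh_prod_term_realize]
  exact congrArg₂ Prod.mk
    (congrArg (fun w => (Z.one i).realize w) (funext fun x => x.elim))
    (congrArg (fun w => (Z.one i).realize w) (funext fun x => x.elim))

theorem fh_inVariety_prod {E : Set (Identity L)} {A B : Type u} [L.Structure A] [L.Structure B]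
    (hA : InVariety E A) (hB : InVariety E B) : InVariety E (A × B) := by
  intro e he v
  rw [fh_prod_term_realize, fh_prod_term_realize, hA e he, hB e he]

theorem fh_inVariety_quot {E : Set (Identity L)} {A : Type u} [L.Structure A]
    (hA : InVariety E A) (c : AlgCon L A) : InVariety E (ConQuot c) := by
  intro e he v
  have hmk : ∀ {m : ℕ} (f : L.Functions m) (x : Fin m → A),
      ConQuot.mk c (funMap f x) = funMap f (fun i => ConQuot.mk c (x i)) :=
    fun f x => (conQuot_funMap_mk c f x).symm
  have hv : v = fun i => ConQuot.mk c (Quotient.out (α := A) (s := c.setoid) (v i)) := by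
    funext i; exact (Quotient.out_eq _).symm
  rw [hv, fh_term_transfer (ConQuot.mk c) hmk, fh_term_transfer (ConQuot.mk c) hmk,
    hA e he]

/-- The key transfer lemma: if `h : A × B → C × D` commutes with the operations and
maps the canonical central element `[0,1]` of `A × B` to that of `C × D`, then the
second component of `h` does not depend on the first argument. -/
theorem fh_key [halg : L.IsAlgebraic] (E : Set (Identity L)) (Z : ZeroOneData L)
    {m : ℕ} {ψ : L.BoundedFormula ((Fin Z.n) ⊕ (Fin 2)) m} (hqf : ψ.IsQF)
    (hφ : RightFormulaWorks.{u} E Z ψ.exs)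
    (A B C D : Type u) [L.Structure A] [L.Structure B] [L.Structure C] [L.Structure D]
    (hA : InVariety E A) (hB : InVariety E B) (hC : InVariety E C) (hD : InVariety E D)
    (h : A × B → C × D)
    (hmap : ∀ {k : ℕ} (fn : L.Functions k) (x : Fin k → A × B),
      h (funMap fn x) = funMap fn (fun i => h (x i)))
    (hhe : ∀ i, h (Z.zeroA A i, Z.oneA B i) = (Z.zeroA C i, Z.oneA D i)) :
    ∀ (a a' : A) (b : B), (h (a, b)).2 = (h (a', b)).2 := by
  intro a a' b
  -- the "graph" map into (A × C) × (B × D)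
  let g : A × B → (A × C) × (B × D) := fun p => ((p.1, (h p).1), (p.2, (h p).2))
  have hginj : Function.Injective g := by
    intro p q hpq
    exact Prod.ext (congrArg (fun z => z.1.1) hpq) (congrArg (fun z => z.2.1) hpq)
  have hgfun : ∀ {k : ℕ} (fn : L.Functions k) (x : Fin k → A × B),
      g (funMap fn x) = funMap fn (fun i => g (x i)) := by
    intro k fn x
    show (((funMap fn x : A × B).1, (h (funMap fn x)).1),
      ((funMap fn x : A × B).2, (h (funMap fn x)).2)) = _
    rw [hmap fn x]
    rfl
  -- the formula holds in A × B at the central valuation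
  set v : (Fin Z.n ⊕ Fin 2) → A × B :=
    Sum.elim (fun i => (Z.zeroA A i, Z.oneA B i)) ![(a, b), (a', b)] with hv
  have h1 : (ψ.exs).Realize (M := A × B) v := (hφ A B hA hB a a' b b).2 rfl
  rw [BoundedFormula.realize_exs] at h1
  obtain ⟨xs, hxs⟩ := h1
  have h2 : ψ.Realize (fun x => g (v x)) (fun i => g (xs i)) :=
    (fh_qf_transfer g hginj hgfun hqf v xs).2 hxs
  have h3 : (ψ.exs).Realize (M := (A × C) × (B × D)) (fun x => g (v x)) :=
    BoundedFormula.realize_exs.2 ⟨fun i => g (xs i), h2⟩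
  have hveq : (fun x => g (v x))
      = Sum.elim (fun i => (Z.zeroA (A × C) i, Z.oneA (B × D) i))
        ![((a, (h (a, b)).1), (b, (h (a, b)).2)), ((a', (h (a', b)).1), (b, (h (a', b)).2))] := by
    funext x
    cases x with
    | inl i =>
        show g (Z.zeroA A i, Z.oneA B i) = _
        show ((Z.zeroA A i, (h (Z.zeroA A i, Z.oneA B i)).1),
          (Z.oneA B i, (h (Z.zeroA A i, Z.oneA B i)).2)) = _
        rw [hhe i, Sum.elim_inl, fh_zeroA_prod Z A C i, fh_oneA_prod Z B D i]
    | inr j =>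
        fin_cases j <;> rfl
  rw [hveq] at h3
  have h4 := (hφ (A × C) (B × D) (fh_inVariety_prod hA hC) (fh_inVariety_prod hB hD)
    ((a, (h (a, b)).1)) ((a', (h (a', b)).1)) ((b, (h (a, b)).2)) ((b, (h (a', b)).2))).1 h3
  exact congrArg (fun z : (B × D) => z.2) h4

end FHAux

/-- Every variety with RexDFC that is stable by complements has the
Fraser–Horn property: every congruence on a binary product factorizes. -/
theorem statement2 (L : FirstOrder.Language.{0, 0}) [L.IsAlgebraic]
    [Finite (Σ n, L.Functions n)]
    (E : Set (Identity L)) (Z : ZeroOneData L)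
    (hsep : ZeroOneData.Separates.{u} Z E) (hrex : HasRexDFC.{u} E Z)
    (hstable : StableByComplements.{u} E Z) :
    ∀ (A B : Type u) [L.Structure A] [L.Structure B],
      InVariety E A → InVariety E B →
      ∀ γ : AlgCon L (A × B), ∃ (γ₁ : AlgCon L A) (γ₂ : AlgCon L B),
        ∀ p q : A × B, γ.r p q ↔ γ₁.r p.1 q.1 ∧ γ₂.r p.2 q.2 := by
  intro A B iA iB hA hB γ
  classical
  obtain ⟨hbfc, φ, ⟨m, ψ, hqf, rfl⟩, hφ⟩ := hrex
  -- the canonical complementary central elements of A × B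
  set e : Fin Z.n → A × B := fun i => (Z.zeroA A i, Z.oneA B i) with he_def
  set f : Fin Z.n → A × B := fun i => (Z.oneA A i, Z.zeroA B i) with hf_def
  have hAB : InVariety E (A × B) := fh_inVariety_prod hA hB
  have hQ : InVariety E (ConQuot γ) := fh_inVariety_quot hAB γ
  have hdia : CentDiamond E Z (A × B) e f :=
    ⟨{ A₁ := A, A₂ := B, mem₁ := hA, mem₂ := hB,
       iso := FirstOrder.Language.Equiv.refl L (A × B),
       he := fun i => rfl, hf := fun i => rfl }⟩
  obtain ⟨W⟩ := hstable (A × B) (ConQuot γ) hAB hQ (conQuotMk γ) e f hdia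
  letI := W.s₁
  letI := W.s₂
  have hC : InVariety E W.A₁ := W.mem₁
  have hD : InVariety E W.A₂ := W.mem₂
  -- the induced map h : A × B → C × D
  let h : A × B → W.A₁ × W.A₂ := fun p => W.iso ((conQuotMk γ) p)
  have hmap : ∀ {k : ℕ} (fn : L.Functions k) (x : Fin k → A × B),
      h (funMap fn x) = funMap fn (fun i => h (x i)) := by
    intro k fn x
    show W.iso ((conQuotMk γ) (funMap fn x)) = _
    rw [Hom.map_fun, Equiv.map_fun]
    rfl
  have hker : ∀ p q : A × B, γ.r p q ↔ h p = h q := by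
    intro p q
    constructor
    · intro hpq
      exact congrArg W.iso (Quotient.sound (s := γ.setoid) hpq)
    · intro hh
      exact Quotient.exact (s := γ.setoid) (W.iso.injective hh)
  -- h(e) = [0,1], h(f) = [1,0]
  have hhe : ∀ i, h (Z.zeroA A i, Z.oneA B i) = (Z.zeroA W.A₁ i, Z.oneA W.A₂ i) := W.he
  have hhf : ∀ i, h (Z.oneA A i, Z.zeroA B i) = (Z.oneA W.A₁ i, Z.zeroA W.A₂ i) := W.hf
  -- the second component of h depends only on the second argument
  have hR : ∀ (a a' : A) (b : B), (h (a, b)).2 = (h (a', b)).2 :=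
    fh_key E Z hqf hφ A B W.A₁ W.A₂ hA hB hC hD h hmap hhe
  -- the first component of h depends only on the first argument (by symmetry)
  have hL : ∀ (a : A) (b b' : B), (h (a, b)).1 = (h (a, b')).1 := by
    let h' : B × A → W.A₂ × W.A₁ := fun q => ((h (q.2, q.1)).2, (h (q.2, q.1)).1)
    have hmap' : ∀ {k : ℕ} (fn : L.Functions k) (x : Fin k → B × A),
        h' (funMap fn x) = funMap fn (fun i => h' (x i)) := by
      intro k fn x
      show ((h ((funMap fn x : B × A).2, (funMap fn x : B × A).1)).2,
        (h ((funMap fn x : B × A).2, (funMap fn x : B × A).1)).1) = _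
      have hc : (((funMap fn x : B × A).2, (funMap fn x : B × A).1) : A × B)
          = funMap fn (fun i => ((x i).2, (x i).1)) := rfl
      rw [hc, hmap fn]
      rfl
    have hhe' : ∀ i, h' (Z.zeroA B i, Z.oneA A i) = (Z.zeroA W.A₂ i, Z.oneA W.A₁ i) := by
      intro i
      show ((h (Z.oneA A i, Z.zeroA B i)).2, (h (Z.oneA A i, Z.zeroA B i)).1) = _
      rw [hhf i]
    have := fh_key E Z hqf hφ B A W.A₂ W.A₁ hB hA hD hC h' hmap' hhe'
    intro a b b'
    exact this b b' a
  -- base points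
  have hnpos : (0 : ℕ) < Z.n := Z.npos
  let i₀ : Fin Z.n := ⟨0, hnpos⟩
  let a₀ : A := Z.zeroA A i₀
  let b₀ : B := Z.zeroA B i₀
  have hL' : ∀ (p : A × B) (b' : B), (h p).1 = (h (p.1, b')).1 := by
    intro p b'
    have := hL p.1 p.2 b'
    rwa [Prod.mk.eta] at this
  have hR' : ∀ (p : A × B) (a' : A), (h p).2 = (h (a', p.2)).2 := by
    intro p a'
    have := hR p.1 a' p.2
    rwa [Prod.mk.eta] at this
  -- the two factor congruences
  refine ⟨{ r := fun a a' => (h (a, b₀)).1 = (h (a', b₀)).1,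
            refl := fun a => rfl,
            symm := fun hx => hx.symm,
            trans := fun hx hy => hx.trans hy,
            compat := ?_ },
          { r := fun b b' => (h (a₀, b)).2 = (h (a₀, b')).2,
            refl := fun b => rfl,
            symm := fun hx => hx.symm,
            trans := fun hx hy => hx.trans hy,
            compat := ?_ }, ?_⟩
  · intro k fn x y hx
    have key : ∀ x : Fin k → A,
        (h (funMap fn x, b₀)).1 = funMap fn (fun i => (h (x i, b₀)).1) := by
      intro x
      have h1 : (h (funMap fn x, b₀)).1
          = (h (funMap fn x, funMap fn (fun _ => b₀))).1 := hL _ _ _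
      have h2 : ((funMap fn x, funMap fn (fun _ => b₀)) : A × B)
          = funMap fn (fun i => (x i, b₀)) := rfl
      rw [h1, h2, hmap fn]
      rfl
    rw [key x, key y]
    exact congrArg (funMap fn) (funext hx)
  · intro k fn x y hx
    have key : ∀ x : Fin k → B,
        (h (a₀, funMap fn x)).2 = funMap fn (fun i => (h (a₀, x i)).2) := by
      intro x
      have h1 : (h (a₀, funMap fn x)).2
          = (h (funMap fn (fun _ => a₀), funMap fn x)).2 := hR _ _ _
      have h2 : ((funMap fn (fun _ => a₀), funMap fn x) : A × B)
          = funMap fn (fun i => (a₀, x i)) := rfl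
      rw [h1, h2, hmap fn]
      rfl
    rw [key x, key y]
    exact congrArg (funMap fn) (funext hx)
  · intro p q
    rw [hker p q, Prod.ext_iff]
    show _ ↔ ((h (p.1, b₀)).1 = (h (q.1, b₀)).1 ∧ (h (a₀, p.2)).2 = (h (a₀, q.2)).2)
    rw [← hL' p b₀, ← hL' q b₀]
    have hp2 : (h (a₀, p.2)).2 = (h p).2 := (hR' p a₀).symm
    have hq2 : (h (a₀, q.2)).2 = (h q).2 := (hR' q a₀).symm
    rw [hp2, hq2]
end

section
/- Let V be a variety with right existentially definable factor congruences (RexDFC) that is stable by complements, let A, B ∈ V and let f: A → B be a homomorphism. Then f maps central elements to central elements and the restriction f|_{Z(A)}: Z(A) → Z(B) is a homomorphism of Boolean algebras with respect to the center Boolean algebra structures: it preserves ∧, ∨, complement, 0⃗ and 1⃗. -/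
open FirstOrder FirstOrder.Language FirstOrder.Language.Structure

universe u v w

open Paper

namespace S4

open Paper

variable {L : FirstOrder.Language.{0, 0}}

theorem homclass_closedTerm {F : Type*} {A : Type u} {B : Type v}
    [L.Structure A] [L.Structure B] [FunLike F A B] [FirstOrder.Language.HomClass L F A B]
    (f : F) (t : L.Term Empty) :
    f (t.realize Empty.elim) = t.realize Empty.elim := by
  have h := HomClass.realize_term (t := t) (v := (Empty.elim : Empty → A)) f
  rw [← h]
  congr 1
  funext x
  exact x.elim

theorem homclass_zeroA {F : Type*} {A : Type u} {B : Type v}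
    [L.Structure A] [L.Structure B] [FunLike F A B] [FirstOrder.Language.HomClass L F A B]
    (Z : ZeroOneData L) (f : F) (i : Fin Z.n) :
    f (Z.zeroA A i) = Z.zeroA B i :=
  homclass_closedTerm f (Z.zero i)

theorem homclass_oneA {F : Type*} {A : Type u} {B : Type v}
    [L.Structure A] [L.Structure B] [FunLike F A B] [FirstOrder.Language.HomClass L F A B]
    (Z : ZeroOneData L) (f : F) (i : Fin Z.n) :
    f (Z.oneA A i) = Z.oneA B i :=
  homclass_closedTerm f (Z.one i)

theorem prod_term_realize {A B : Type u} [L.Structure A] [L.Structure B]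
    {α : Type*} (t : L.Term α) (v : α → A × B) :
    t.realize v = (t.realize (fun i => (v i).1), t.realize (fun i => (v i).2)) := by
  induction t with
  | var i => rfl
  | func f ts ih =>
    show funMap f (fun i => (ts i).realize v) = _
    have h : (fun i => (ts i).realize v)
        = fun i => ((ts i).realize (fun j => (v j).1), (ts i).realize (fun j => (v j).2)) :=
      funext ih
    rw [h]
    rfl

theorem zeroA_prod (Z : ZeroOneData L) {A B : Type u} [L.Structure A] [L.Structure B]
    (i : Fin Z.n) : Z.zeroA (A × B) i = (Z.zeroA A i, Z.zeroA B i) := by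
  show (Z.zero i).realize Empty.elim = _
  rw [prod_term_realize]
  have h1 : (fun j : Empty => ((Empty.elim j : A × B)).1) = (Empty.elim : Empty → A) :=
    funext fun x => x.elim
  have h2 : (fun j : Empty => ((Empty.elim j : A × B)).2) = (Empty.elim : Empty → B) :=
    funext fun x => x.elim
  rw [h1, h2]
  rfl

theorem oneA_prod (Z : ZeroOneData L) {A B : Type u} [L.Structure A] [L.Structure B]
    (i : Fin Z.n) : Z.oneA (A × B) i = (Z.oneA A i, Z.oneA B i) := by
  show (Z.one i).realize Empty.elim = _
  rw [prod_term_realize]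
  have h1 : (fun j : Empty => ((Empty.elim j : A × B)).1) = (Empty.elim : Empty → A) :=
    funext fun x => x.elim
  have h2 : (fun j : Empty => ((Empty.elim j : A × B)).2) = (Empty.elim : Empty → B) :=
    funext fun x => x.elim
  rw [h1, h2]
  rfl

theorem inVariety_prod {E : Set (Identity L)} {A B : Type u} [L.Structure A] [L.Structure B]
    (hA : InVariety E A) (hB : InVariety E B) : InVariety E (A × B) := by
  intro e he v
  rw [prod_term_realize, prod_term_realize, hA e he, hB e he]

theorem inVariety_quot {E : Set (Identity L)} {A : Type u} [L.Structure A]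
    (hA : InVariety E A) (c : AlgCon L A) : InVariety E (ConQuot c) := by
  intro e he v
  have hv : v = (conQuotMk c) ∘ (fun i => Quotient.out (α := A) (s := c.setoid) (v i)) := by
    funext i
    exact (Quotient.out_eq (v i)).symm
  rw [hv]
  have h1 := HomClass.realize_term (t := e.lhs)
    (v := fun i => Quotient.out (α := A) (s := c.setoid) (v i)) (conQuotMk c)
  have h2 := HomClass.realize_term (t := e.rhs)
    (v := fun i => Quotient.out (α := A) (s := c.setoid) (v i)) (conQuotMk c)
  rw [h1, h2, hA e he]

/-- Pullback of a congruence along a homomorphism. -/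
def pullCon {A B : Type u} [L.Structure A] [L.Structure B] (f : A →[L] B) (c : AlgCon L B) :
    AlgCon L A where
  r x y := c.r (f x) (f y)
  refl a := c.refl (f a)
  symm h := c.symm h
  trans h1 h2 := c.trans h1 h2
  compat g x y h := by
    show c.r (f (funMap g x)) (f (funMap g y))
    rw [f.map_fun, f.map_fun]
    exact c.compat g _ _ h

theorem sup_left {A : Type u} [L.Structure A] {c d : AlgCon L A} {x y : A} (h : c.r x y) :
    (c.sup d).r x y := fun e he => he x y (Or.inl h)

theorem sup_right {A : Type u} [L.Structure A] {c d : AlgCon L A} {x y : A} (h : d.r x y) :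
    (c.sup d).r x y := fun e he => he x y (Or.inr h)

theorem complFC_symm {A : Type u} [L.Structure A] {θ δ : AlgCon L A} (h : IsComplFC θ δ) :
    IsComplFC δ θ := by
  constructor
  · rw [← h.1]
    apply AlgCon.ext'
    exact fun a b => ⟨fun hh => ⟨hh.2, hh.1⟩, fun hh => ⟨hh.2, hh.1⟩⟩
  · intro a b
    obtain ⟨z, h1, h2⟩ := h.2 b a
    exact ⟨z, δ.symm h2, θ.symm h1⟩

variable [L.IsAlgebraic]

/-- The canonical homomorphism to the product of two quotients. -/
def fcHom {A : Type u} [L.Structure A] (θ δ : AlgCon L A) : A →[L] (ConQuot θ × ConQuot δ) where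
  toFun x := (ConQuot.mk θ x, ConQuot.mk δ x)
  map_fun' := fun g x => by
    refine Prod.ext ?_ ?_
    · exact (conQuot_funMap_mk θ g x).symm
    · exact (conQuot_funMap_mk δ g x).symm
  map_rel' := fun r _ _ => isEmptyElim r

/-- The decomposition isomorphism induced by complementary factor congruences. -/
noncomputable def isoOfFC {A : Type u} [L.Structure A] (θ δ : AlgCon L A)
    (h : IsComplFC θ δ) : A ≃[L] (ConQuot θ × ConQuot δ) where
  toEquiv := Equiv.ofBijective (fcHom θ δ) (by
    constructor
    · intro x y hxy
      have h1 := congrArg Prod.fst hxy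
      have h2 := congrArg Prod.snd hxy
      have hxy2 : (θ.inf δ).r x y := ⟨Quotient.exact h1, Quotient.exact h2⟩
      rw [h.1] at hxy2
      exact hxy2
    · rintro ⟨u, v⟩
      obtain ⟨z, hz1, hz2⟩ := h.2 (Quotient.out (α := A) (s := θ.setoid) u)
        (Quotient.out (α := A) (s := δ.setoid) v)
      refine ⟨z, Prod.ext ?_ ?_⟩
      · show ConQuot.mk θ z = u
        exact (Quotient.sound (θ.symm hz1)).trans (Quotient.out_eq u)
      · show ConQuot.mk δ z = v
        exact (Quotient.sound hz2).trans (Quotient.out_eq v))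
  map_fun' := (fcHom θ δ).map_fun'
  map_rel' := fun r _ => isEmptyElim r

theorem isoOfFC_apply {A : Type u} [L.Structure A] (θ δ : AlgCon L A)
    (h : IsComplFC θ δ) (x : A) :
    isoOfFC θ δ h x = (ConQuot.mk θ x, ConQuot.mk δ x) := rfl

/-- Quantifier-free formulas are preserved (both ways) by injective homomorphisms in an
algebraic language. -/
theorem qf_realize_of_injective {A B : Type u} [L.Structure A] [L.Structure B]
    (g : A →[L] B) (hg : Function.Injective g) {α : Type*} {k : ℕ}
    {ψ : L.BoundedFormula α k} (h : ψ.IsQF) (v : α → A) (xs : Fin k → A) :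
    ψ.Realize v xs ↔ ψ.Realize (fun a => g (v a)) (fun i => g (xs i)) := by
  induction h with
  | falsum => exact Iff.rfl
  | of_isAtomic ha =>
    cases ha with
    | equal t₁ t₂ =>
      rw [BoundedFormula.realize_bdEqual, BoundedFormula.realize_bdEqual]
      have hcomp : (Sum.elim (fun a => g (v a)) (fun i => g (xs i)))
          = g ∘ (Sum.elim v xs) := funext fun s => by cases s <;> rfl
      rw [hcomp, HomClass.realize_term, HomClass.realize_term]
      exact hg.eq_iff.symm
    | rel r ts => exact isEmptyElim r
  | imp h1 h2 ih1 ih2 =>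
    rw [BoundedFormula.realize_imp, BoundedFormula.realize_imp, ih1, ih2]

/-- The key lemma: in a product of two members of the variety, any congruence containing
all pairs `((0ᵢ,1ᵢ), (1ᵢ,1ᵢ))` contains all pairs with equal second coordinates. -/
theorem core {E : Set (Identity L)} {Z : ZeroOneData L}
    {φ : L.Formula ((Fin Z.n) ⊕ (Fin 2))}
    (hex : IsExistentialForm φ) (hw : RightFormulaWorks.{u} E Z φ)
    {A₁ A₂ : Type u} [L.Structure A₁] [L.Structure A₂]
    (h₁ : InVariety E A₁) (h₂ : InVariety E A₂)
    (c : AlgCon L (A₁ × A₂))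
    (hc : ∀ i, c.r (Z.zeroA A₁ i, Z.oneA A₂ i) (Z.oneA (A₁ × A₂) i)) :
    ∀ (x y : A₁) (w : A₂), c.r (x, w) (y, w) := by
  intro x y w
  set η : AlgCon L (A₁ × A₂) := AlgCon.conGen L
      (fun p q => ∃ i, p = (Z.zeroA A₁ i, Z.oneA A₂ i) ∧ q = Z.oneA (A₁ × A₂) i) with hηdef
  have hgen : ∀ i, η.r (Z.zeroA A₁ i, Z.oneA A₂ i) (Z.oneA (A₁ × A₂) i) :=
    fun i d hd => hd _ _ ⟨i, rfl, rfl⟩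
  have hsnd : ∀ p q : A₁ × A₂, η.r p q → p.2 = q.2 := by
    intro p q hpq
    refine hpq ⟨fun p q => p.2 = q.2, fun _ => rfl, Eq.symm, Eq.trans, ?_⟩ ?_
    · intro m g xs ys hxy
      show funMap g (fun i => (xs i).2) = funMap g (fun i => (ys i).2)
      congr 1
      funext i
      exact hxy i
    · rintro p q ⟨i, rfl, rfl⟩
      show Z.oneA A₂ i = (Z.oneA (A₁ × A₂) i).2
      rw [oneA_prod]
  have hQ : InVariety E (ConQuot η) := inVariety_quot (inVariety_prod h₁ h₂) η
  let hmap : (A₁ × A₂) →[L] (A₁ × ConQuot η) :=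
    { toFun := fun p => (p.1, ConQuot.mk η p),
      map_fun' := fun g ps => by
        refine Prod.ext ?_ ?_
        · rfl
        · exact (conQuot_funMap_mk η g ps).symm,
      map_rel' := fun r _ _ => isEmptyElim r }
  have hinj : Function.Injective hmap := by
    intro p q hpq
    have h1 := congrArg Prod.fst hpq
    have h2 := congrArg Prod.snd hpq
    exact Prod.ext h1 (hsnd p q (Quotient.exact h2))
  obtain ⟨m, ψ, hqf, hφ⟩ := hex
  have hreal : φ.Realize (M := A₁ × A₂)
      (Sum.elim (fun i => (Z.zeroA A₁ i, Z.oneA A₂ i)) ![(x, w), (y, w)]) :=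
    (hw A₁ A₂ h₁ h₂ x y w w).2 rfl
  rw [hφ, BoundedFormula.realize_exs] at hreal
  obtain ⟨xs, hψ⟩ := hreal
  have hψ' := (qf_realize_of_injective hmap hinj hqf _ xs).1 hψ
  have hvar : (fun s => hmap (Sum.elim (fun i => (Z.zeroA A₁ i, Z.oneA A₂ i)) ![(x, w), (y, w)] s))
      = Sum.elim (fun i => (Z.zeroA A₁ i, Z.oneA (ConQuot η) i))
          ![(x, ConQuot.mk η (x, w)), (y, ConQuot.mk η (y, w))] := by
    funext s
    rcases s with i | j
    · show (Z.zeroA A₁ i, ConQuot.mk η (Z.zeroA A₁ i, Z.oneA A₂ i)) = _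
      have hmk : ConQuot.mk η (Z.zeroA A₁ i, Z.oneA A₂ i) = Z.oneA (ConQuot η) i :=
        (Quotient.sound (hgen i)).trans (homclass_oneA Z (conQuotMk η) i)
      rw [hmk]
      rfl
    · fin_cases j <;> rfl
  rw [hvar] at hψ'
  have hrealQ : φ.Realize (M := A₁ × ConQuot η)
      (Sum.elim (fun i => (Z.zeroA A₁ i, Z.oneA (ConQuot η) i))
        ![(x, ConQuot.mk η (x, w)), (y, ConQuot.mk η (y, w))]) := by
    rw [hφ, BoundedFormula.realize_exs]
    exact ⟨fun i => hmap (xs i), hψ'⟩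
  have hmked : ConQuot.mk η (x, w) = ConQuot.mk η (y, w) :=
    (hw A₁ (ConQuot η) h₁ hQ x y (ConQuot.mk η (x, w)) (ConQuot.mk η (y, w))).1 hrealQ
  have hη : η.r (x, w) (y, w) := Quotient.exact hmked
  exact hη c (by rintro p q ⟨i, rfl, rfl⟩; exact hc i)

/-- Transfer lemma: if `(θ, δ)` is a complementary pair with `[e,0] ∈ θ`, `[e,1] ∈ δ`, then
`δ` is contained in every congruence containing all pairs `(eᵢ, 1ᵢ)`. -/
theorem pair_le {E : Set (Identity L)} {Z : ZeroOneData L}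
    {φ : L.Formula ((Fin Z.n) ⊕ (Fin 2))}
    (hex : IsExistentialForm φ) (hw : RightFormulaWorks.{u} E Z φ)
    {A : Type u} [L.Structure A] (hA : InVariety E A)
    (θ δ : AlgCon L A) (hfc : IsComplFC θ δ) (e : Fin Z.n → A)
    (h0 : inCon θ e (Z.zeroA A)) (h1 : inCon δ e (Z.oneA A))
    (c : AlgCon L A) (hc : ∀ i, c.r (e i) (Z.oneA A i)) :
    ∀ x y, δ.r x y → c.r x y := by
  intro x y hxy
  set τ := isoOfFC θ δ hfc with hτdef
  have hτe : ∀ i, τ (e i) = (Z.zeroA (ConQuot θ) i, Z.oneA (ConQuot δ) i) := by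
    intro i
    rw [isoOfFC_apply]
    have a1 : ConQuot.mk θ (e i) = Z.zeroA (ConQuot θ) i :=
      (Quotient.sound (h0 i)).trans (homclass_zeroA Z (conQuotMk θ) i)
    have a2 : ConQuot.mk δ (e i) = Z.oneA (ConQuot δ) i :=
      (Quotient.sound (h1 i)).trans (homclass_oneA Z (conQuotMk δ) i)
    rw [a1, a2]
  set cP := pullCon (τ.symm.toHom) c with hcPdef
  have hcP : ∀ i, cP.r (Z.zeroA (ConQuot θ) i, Z.oneA (ConQuot δ) i)
      (Z.oneA (ConQuot θ × ConQuot δ) i) := by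
    intro i
    show c.r (τ.symm (Z.zeroA (ConQuot θ) i, Z.oneA (ConQuot δ) i))
      (τ.symm (Z.oneA (ConQuot θ × ConQuot δ) i))
    have b1 : τ.symm (Z.zeroA (ConQuot θ) i, Z.oneA (ConQuot δ) i) = e i := by
      rw [← hτe i, FirstOrder.Language.Equiv.symm_apply_apply]
    have b2 : τ.symm (Z.oneA (ConQuot θ × ConQuot δ) i) = Z.oneA A i :=
      homclass_oneA Z τ.symm i
    rw [b1, b2]
    exact hc i
  have hcore := core hex hw (inVariety_quot hA θ) (inVariety_quot hA δ) cP hcP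
    (ConQuot.mk θ x) (ConQuot.mk θ y) (ConQuot.mk δ x)
  have hδmk : ConQuot.mk δ x = ConQuot.mk δ y := Quotient.sound hxy
  have e1 : τ.symm (ConQuot.mk θ x, ConQuot.mk δ x) = x := by
    rw [show ((ConQuot.mk θ x, ConQuot.mk δ x) : ConQuot θ × ConQuot δ) = τ x from rfl,
      FirstOrder.Language.Equiv.symm_apply_apply]
  have e2 : τ.symm (ConQuot.mk θ y, ConQuot.mk δ x) = y := by
    rw [hδmk, show ((ConQuot.mk θ y, ConQuot.mk δ y) : ConQuot θ × ConQuot δ) = τ y from rfl,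
      FirstOrder.Language.Equiv.symm_apply_apply]
  have hfin : c.r (τ.symm (ConQuot.mk θ x, ConQuot.mk δ x))
      (τ.symm (ConQuot.mk θ y, ConQuot.mk δ x)) := hcore
  rw [e1, e2] at hfin
  exact hfin

/-- From a complementary pair for `e` and the membership conditions for `a`, produce a
complementary-central-elements witness. -/
theorem pair_witness' {E : Set (Identity L)} {Z : ZeroOneData L}
    {A : Type u} [L.Structure A] (hA : InVariety E A)
    {e : Fin Z.n → A} {θ δ : AlgCon L A} (hpf : PairFor Z A e θ δ)
    (a : Fin Z.n → A) (ha1 : inCon θ a (Z.oneA A)) (ha0 : inCon δ a (Z.zeroA A)) :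
    Nonempty (ComplCentralWitness E Z A e a) := by
  set τ := isoOfFC θ δ hpf.1 with hτdef
  refine ⟨{ A₁ := ConQuot θ, A₂ := ConQuot δ, s₁ := inferInstance, s₂ := inferInstance,
            mem₁ := inVariety_quot hA θ, mem₂ := inVariety_quot hA δ, iso := τ,
            he := ?_, hf := ?_ }⟩
  · intro i
    rw [isoOfFC_apply]
    have a1 : ConQuot.mk θ (e i) = Z.zeroA (ConQuot θ) i :=
      (Quotient.sound (hpf.2.1 i)).trans (homclass_zeroA Z (conQuotMk θ) i)
    have a2 : ConQuot.mk δ (e i) = Z.oneA (ConQuot δ) i :=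
      (Quotient.sound (hpf.2.2 i)).trans (homclass_oneA Z (conQuotMk δ) i)
    rw [a1, a2]
  · intro i
    rw [isoOfFC_apply]
    have a1 : ConQuot.mk θ (a i) = Z.oneA (ConQuot θ) i :=
      (Quotient.sound (ha1 i)).trans (homclass_oneA Z (conQuotMk θ) i)
    have a2 : ConQuot.mk δ (a i) = Z.zeroA (ConQuot δ) i :=
      (Quotient.sound (ha0 i)).trans (homclass_zeroA Z (conQuotMk δ) i)
    rw [a1, a2]

/-- From a complementary pair for `e`, produce a complement `a` of `e` together with its
membership conditions. -/
theorem pair_witness {E : Set (Identity L)} {Z : ZeroOneData L}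
    {A : Type u} [L.Structure A] (hA : InVariety E A)
    {e : Fin Z.n → A} {θ δ : AlgCon L A} (hpf : PairFor Z A e θ δ) :
    ∃ a : Fin Z.n → A, Nonempty (ComplCentralWitness E Z A e a) ∧
      inCon θ a (Z.oneA A) ∧ inCon δ a (Z.zeroA A) := by
  set τ := isoOfFC θ δ hpf.1 with hτdef
  set a : Fin Z.n → A :=
    fun i => τ.symm (Z.oneA (ConQuot θ) i, Z.zeroA (ConQuot δ) i) with hadef
  have hτa : ∀ i, τ (a i) = (Z.oneA (ConQuot θ) i, Z.zeroA (ConQuot δ) i) :=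
    fun i => FirstOrder.Language.Equiv.apply_symm_apply τ _
  have ha1 : inCon θ a (Z.oneA A) := by
    intro i
    refine Quotient.exact (s := θ.setoid) ?_
    show ConQuot.mk θ (a i) = ConQuot.mk θ (Z.oneA A i)
    have hfst := congrArg Prod.fst (hτa i)
    exact hfst.trans (homclass_oneA Z (conQuotMk θ) i).symm
  have ha0 : inCon δ a (Z.zeroA A) := by
    intro i
    refine Quotient.exact (s := δ.setoid) ?_
    show ConQuot.mk δ (a i) = ConQuot.mk δ (Z.zeroA A i)
    have hsnd := congrArg Prod.snd (hτa i)
    exact hsnd.trans (homclass_zeroA Z (conQuotMk δ) i).symm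
  exact ⟨a, pair_witness' hA hpf a ha1 ha0, ha1, ha0⟩

/-- From a complementary-central-elements witness, extract the pair of kernel congruences. -/
theorem kernel_pairs {E : Set (Identity L)} {Z : ZeroOneData L}
    {B : Type u} [L.Structure B] {e' a' : Fin Z.n → B}
    (W : ComplCentralWitness E Z B e' a') :
    ∃ θ δ : AlgCon L B, PairFor Z B e' θ δ ∧ inCon θ a' (Z.oneA B) ∧ inCon δ a' (Z.zeroA B) := by
  letI := W.s₁
  letI := W.s₂
  set τ := W.iso with hτdef
  refine ⟨⟨fun x y => (τ x).1 = (τ y).1, fun _ => rfl, Eq.symm, Eq.trans, ?_⟩,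
          ⟨fun x y => (τ x).2 = (τ y).2, fun _ => rfl, Eq.symm, Eq.trans, ?_⟩,
          ⟨⟨?_, ?_⟩, ?_, ?_⟩, ?_, ?_⟩
  · intro m g xs ys h
    show (τ (funMap g xs)).1 = (τ (funMap g ys)).1
    rw [FirstOrder.Language.Equiv.map_fun, FirstOrder.Language.Equiv.map_fun]
    show funMap g (fun i => (τ (xs i)).1) = funMap g (fun i => (τ (ys i)).1)
    congr 1
    funext i
    exact h i
  · intro m g xs ys h
    show (τ (funMap g xs)).2 = (τ (funMap g ys)).2
    rw [FirstOrder.Language.Equiv.map_fun, FirstOrder.Language.Equiv.map_fun]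
    show funMap g (fun i => (τ (xs i)).2) = funMap g (fun i => (τ (ys i)).2)
    congr 1
    funext i
    exact h i
  · -- inf = delta
    apply AlgCon.ext'
    intro a b
    constructor
    · rintro ⟨u1, u2⟩
      exact τ.injective (Prod.ext u1 u2)
    · rintro rfl
      exact ⟨rfl, rfl⟩
  · -- composition is everything
    intro a b
    refine ⟨τ.symm ((τ a).1, (τ b).2), ?_, ?_⟩
    · show (τ a).1 = (τ (τ.symm ((τ a).1, (τ b).2))).1
      rw [FirstOrder.Language.Equiv.apply_symm_apply]
    · show (τ (τ.symm ((τ a).1, (τ b).2))).2 = (τ b).2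
      rw [FirstOrder.Language.Equiv.apply_symm_apply]
  · -- [e', 0] in θ
    intro i
    show (τ (e' i)).1 = (τ (Z.zeroA B i)).1
    rw [W.he i, homclass_zeroA Z τ i, zeroA_prod]
  · -- [e', 1] in δ
    intro i
    show (τ (e' i)).2 = (τ (Z.oneA B i)).2
    rw [W.he i, homclass_oneA Z τ i, oneA_prod]
  · -- [a', 1] in θ
    intro i
    show (τ (a' i)).1 = (τ (Z.oneA B i)).1
    rw [W.hf i, homclass_oneA Z τ i, oneA_prod]
  · -- [a', 0] in δ
    intro i
    show (τ (a' i)).2 = (τ (Z.zeroA B i)).2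
    rw [W.hf i, homclass_zeroA Z τ i, zeroA_prod]

end S4

/-- In a variety with RexDFC stable by complements, every
homomorphism maps central elements to central elements and restricts to a
Boolean algebra homomorphism between the centers (preserving ∧, ∨, complement,
0⃗ and 1⃗). -/
theorem statement4 (L : FirstOrder.Language.{0, 0}) [L.IsAlgebraic]
    [Finite (Σ n, L.Functions n)]
    (E : Set (Identity L)) (Z : ZeroOneData L)
    (hsep : ZeroOneData.Separates.{u} Z E) (hrex : HasRexDFC.{u} E Z)
    (hstable : StableByComplements.{u} E Z)
    (A B : Type u) [L.Structure A] [L.Structure B]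
    (hA : InVariety E A) (hB : InVariety E B) (f : A →[L] B) :
    (∀ e : Fin Z.n → A, IsCentral E Z A e → IsCentral E Z B (fun i => f (e i))) ∧
    (∀ e g a : Fin Z.n → A, IsCentral E Z A e → IsCentral E Z A g →
      IsMeetOf Z A e g a →
      IsMeetOf Z B (fun i => f (e i)) (fun i => f (g i)) (fun i => f (a i))) ∧
    (∀ e g a : Fin Z.n → A, IsCentral E Z A e → IsCentral E Z A g →
      IsJoinOf Z A e g a →
      IsJoinOf Z B (fun i => f (e i)) (fun i => f (g i)) (fun i => f (a i))) ∧
    (∀ e a : Fin Z.n → A, IsCentral E Z A e → IsComplOf Z A e a →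
      IsComplOf Z B (fun i => f (e i)) (fun i => f (a i))) ∧
    ((fun i => f (Z.zeroA A i)) = Z.zeroA B) ∧
    ((fun i => f (Z.oneA A i)) = Z.oneA B) := by
  obtain ⟨hbfc, φ, hex, hw⟩ := hrex
  have hf0 : ∀ i, f (Z.zeroA A i) = Z.zeroA B i := fun i => S4.homclass_zeroA Z f i
  have hf1 : ∀ i, f (Z.oneA A i) = Z.oneA B i := fun i => S4.homclass_oneA Z f i
  have central : ∀ (e a : Fin Z.n → A), Nonempty (ComplCentralWitness E Z A e a) →
      Nonempty (ComplCentralWitness E Z B (fun i => f (e i)) (fun i => f (a i))) :=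
    fun e a h => hstable A B hA hB f e a h
  refine ⟨?_, ?_, ?_, ?_, funext hf0, funext hf1⟩
  · -- central elements are preserved
    rintro e ⟨W⟩
    letI := W.s₁
    letI := W.s₂
    have hW : Nonempty (ComplCentralWitness E Z A e
        (fun i => W.iso.symm (Z.oneA W.A₁ i, Z.zeroA W.A₂ i))) :=
      ⟨{ toCentralWitness := W, hf := fun i => FirstOrder.Language.Equiv.apply_symm_apply W.iso _ }⟩
    obtain ⟨W'⟩ := central _ _ hW
    exact ⟨W'.toCentralWitness⟩
  · -- meets are preserved
    rintro e g a _ _ ⟨θ0e, θ1e, θ0g, θ1g, hpe, hpg, hinf, hsup⟩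
    obtain ⟨ee, hWe, he1, he0⟩ := S4.pair_witness hA hpe
    obtain ⟨gg, hWg, hg1, hg0⟩ := S4.pair_witness hA hpg
    obtain ⟨We⟩ := central e ee hWe
    obtain ⟨Wg⟩ := central g gg hWg
    obtain ⟨θ0e', θ1e', hpe', hee1, hee0⟩ := S4.kernel_pairs We
    obtain ⟨θ0g', θ1g', hpg', hgg1, hgg0⟩ := S4.kernel_pairs Wg
    have t0e : ∀ x y, θ0e.r x y → θ0e'.r (f x) (f y) := by
      intro x y hxy
      refine S4.pair_le hex hw hA θ1e θ0e (S4.complFC_symm hpe.1) ee he0 he1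
        (S4.pullCon f θ0e') ?_ x y hxy
      intro i
      show θ0e'.r (f (ee i)) (f (Z.oneA A i))
      rw [hf1 i]
      exact hee1 i
    have t1e : ∀ x y, θ1e.r x y → θ1e'.r (f x) (f y) := by
      intro x y hxy
      refine S4.pair_le hex hw hA θ0e θ1e hpe.1 e hpe.2.1 hpe.2.2
        (S4.pullCon f θ1e') ?_ x y hxy
      intro i
      show θ1e'.r (f (e i)) (f (Z.oneA A i))
      rw [hf1 i]
      exact hpe'.2.2 i
    have t0g : ∀ x y, θ0g.r x y → θ0g'.r (f x) (f y) := by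
      intro x y hxy
      refine S4.pair_le hex hw hA θ1g θ0g (S4.complFC_symm hpg.1) gg hg0 hg1
        (S4.pullCon f θ0g') ?_ x y hxy
      intro i
      show θ0g'.r (f (gg i)) (f (Z.oneA A i))
      rw [hf1 i]
      exact hgg1 i
    have t1g : ∀ x y, θ1g.r x y → θ1g'.r (f x) (f y) := by
      intro x y hxy
      refine S4.pair_le hex hw hA θ0g θ1g hpg.1 g hpg.2.1 hpg.2.2
        (S4.pullCon f θ1g') ?_ x y hxy
      intro i
      show θ1g'.r (f (g i)) (f (Z.oneA A i))
      rw [hf1 i]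
      exact hpg'.2.2 i
    refine ⟨θ0e', θ1e', θ0g', θ1g', hpe', hpg', ?_, ?_⟩
    · intro i
      constructor
      · have h := t0e _ _ (hinf i).1
        rwa [hf0 i] at h
      · have h := t0g _ _ (hinf i).2
        rwa [hf0 i] at h
    · intro i
      have hs := hsup i
      have h2 : (S4.pullCon f (θ1e'.sup θ1g')).r (a i) (Z.oneA A i) := by
        refine hs (S4.pullCon f (θ1e'.sup θ1g')) ?_
        rintro x y (hxy | hxy)
        · exact S4.sup_left (t1e x y hxy)
        · exact S4.sup_right (t1g x y hxy)
      have h3 : (θ1e'.sup θ1g').r (f (a i)) (f (Z.oneA A i)) := h2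
      rwa [hf1 i] at h3
  · -- joins are preserved
    rintro e g a _ _ ⟨θ0e, θ1e, θ0g, θ1g, hpe, hpg, hsupc, hinfc⟩
    obtain ⟨ee, hWe, he1, he0⟩ := S4.pair_witness hA hpe
    obtain ⟨gg, hWg, hg1, hg0⟩ := S4.pair_witness hA hpg
    obtain ⟨We⟩ := central e ee hWe
    obtain ⟨Wg⟩ := central g gg hWg
    obtain ⟨θ0e', θ1e', hpe', hee1, hee0⟩ := S4.kernel_pairs We
    obtain ⟨θ0g', θ1g', hpg', hgg1, hgg0⟩ := S4.kernel_pairs Wg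
    have t0e : ∀ x y, θ0e.r x y → θ0e'.r (f x) (f y) := by
      intro x y hxy
      refine S4.pair_le hex hw hA θ1e θ0e (S4.complFC_symm hpe.1) ee he0 he1
        (S4.pullCon f θ0e') ?_ x y hxy
      intro i
      show θ0e'.r (f (ee i)) (f (Z.oneA A i))
      rw [hf1 i]
      exact hee1 i
    have t1e : ∀ x y, θ1e.r x y → θ1e'.r (f x) (f y) := by
      intro x y hxy
      refine S4.pair_le hex hw hA θ0e θ1e hpe.1 e hpe.2.1 hpe.2.2
        (S4.pullCon f θ1e') ?_ x y hxy
      intro i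
      show θ1e'.r (f (e i)) (f (Z.oneA A i))
      rw [hf1 i]
      exact hpe'.2.2 i
    have t0g : ∀ x y, θ0g.r x y → θ0g'.r (f x) (f y) := by
      intro x y hxy
      refine S4.pair_le hex hw hA θ1g θ0g (S4.complFC_symm hpg.1) gg hg0 hg1
        (S4.pullCon f θ0g') ?_ x y hxy
      intro i
      show θ0g'.r (f (gg i)) (f (Z.oneA A i))
      rw [hf1 i]
      exact hgg1 i
    have t1g : ∀ x y, θ1g.r x y → θ1g'.r (f x) (f y) := by
      intro x y hxy
      refine S4.pair_le hex hw hA θ0g θ1g hpg.1 g hpg.2.1 hpg.2.2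
        (S4.pullCon f θ1g') ?_ x y hxy
      intro i
      show θ1g'.r (f (g i)) (f (Z.oneA A i))
      rw [hf1 i]
      exact hpg'.2.2 i
    refine ⟨θ0e', θ1e', θ0g', θ1g', hpe', hpg', ?_, ?_⟩
    · intro i
      have hs := hsupc i
      have h2 : (S4.pullCon f (θ0e'.sup θ0g')).r (a i) (Z.zeroA A i) := by
        refine hs (S4.pullCon f (θ0e'.sup θ0g')) ?_
        rintro x y (hxy | hxy)
        · exact S4.sup_left (t0e x y hxy)
        · exact S4.sup_right (t0g x y hxy)
      have h3 : (θ0e'.sup θ0g').r (f (a i)) (f (Z.zeroA A i)) := h2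
      rwa [hf0 i] at h3
    · intro i
      constructor
      · have h := t1e _ _ (hinfc i).1
        rwa [hf1 i] at h
      · have h := t1g _ _ (hinfc i).2
        rwa [hf1 i] at h
  · -- complements are preserved
    rintro e a _ ⟨θ0, θ1, hpf, ha1, ha0⟩
    obtain ⟨W⟩ := S4.pair_witness' hA hpf a ha1 ha0
    obtain ⟨W'⟩ := central e a ⟨W⟩
    obtain ⟨θ0', θ1', hpf', h1', h0'⟩ := S4.kernel_pairs W'
    exact ⟨θ0', θ1', hpf', h1', h0'⟩
end
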